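/- arXiv:2306.16432 — 8 statements merged into one kernel-verified Lean document; each statement's English description precedes it below -/
import Mathlib

section
/- Contraction estimate for the integral operator P (Lemma A.1, estimate (A.2)): For every T > 0 and every pair of continuous maps n, m : [0,T] → L¹(R) × L¹(V) with n(0) = m(0), the operator P defined by P[n](t) := n(0) + ∫_0^t F[n](s) ds satisfies sup_{t ∈ [0,T]} ‖P[n](t) - P[m](t)‖_A ≤ 2T [max(θ_R, θ_V) + θ_X (‖n‖_B + ‖m‖_B)] ‖n - m‖_B, where ‖(u,w)‖_A := ‖u‖_{L¹(R)} + ‖w‖_{L¹(V)} and ‖n‖_B := sup_{t ∈ [0,T]} ‖n(t)‖_A. -/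
/-!
At each time `s`, `F` is Lipschitz on bounded subsets of `L¹`. The redistribution terms
`K_S n_S - n_S` and `K_I n_I - n_I` have `L¹` norm at most twice that of their argument, because
the kernels have column integrals `1`. The infection terms `B(n_S, n_I)` are bilinear, and since
`0 ≤ q ≤ 1` and `Q` is a probability kernel,
`‖B(n_S, n_I) - B(m_S, m_I)‖ ≤ ‖n_S - m_S‖ ‖n_I‖ + ‖m_S‖ ‖n_I - m_I‖`.
As `n(0) = m(0)`, `P[n](t) - P[m](t) = ∫₀ᵗ (F[n] - F[m])`, whose `L¹` norm is at most the time
integral of the `L¹` norms (Fubini), hence at most `t` times the Lipschitz bound. Continuity of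
`n` and `m` into `L¹` makes the `B`-norms finite suprema over the compact interval `[0, T]`.
-/

open MeasureTheory Set Filter

/-- Right-hand side of the IDE for `n_S`; `KS r r'` stands for `K_S(r | r')`. -/
noncomputable def mesoFS (rA rB vA vB θX θR : ℝ) (KS : ℝ → ℝ → ℝ) (q : ℝ → ℝ → ℝ)
    (nS nI : ℝ → ℝ → ℝ) (t r : ℝ) : ℝ :=
  -(θX * nS t r * ∫ v in Icc vA vB, q r v * nI t v)
    + θR * (∫ r' in Icc rA rB, KS r r' * nS t r') - θR * nS t r

/-- Right-hand side of the IDE for `n_I`; `KI v v'` stands for `K_I(v | v')` and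
`Q v r vs` stands for `Q(v | r, v*)`. -/
noncomputable def mesoFI (rA rB vA vB θX θV : ℝ) (KI : ℝ → ℝ → ℝ)
    (Q : ℝ → ℝ → ℝ → ℝ) (q : ℝ → ℝ → ℝ) (nS nI : ℝ → ℝ → ℝ) (t v : ℝ) : ℝ :=
  θX * (∫ r in Icc rA rB, ∫ v' in Icc vA vB, q r v' * Q v r v' * nS t r * nI t v')
    + θV * (∫ v' in Icc vA vB, KI v v' * nI t v') - θV * nI t v

/-- `S`-component of the integral operator `P[n](t) = n(0) + ∫₀ᵗ F[n](s) ds`. -/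
noncomputable def mesoPS (rA rB vA vB θX θR : ℝ) (KS : ℝ → ℝ → ℝ) (q : ℝ → ℝ → ℝ)
    (nS nI : ℝ → ℝ → ℝ) (t r : ℝ) : ℝ :=
  nS 0 r + ∫ s in (0:ℝ)..t, mesoFS rA rB vA vB θX θR KS q nS nI s r

/-- `I`-component of the integral operator `P[n](t) = n(0) + ∫₀ᵗ F[n](s) ds`. -/
noncomputable def mesoPI (rA rB vA vB θX θV : ℝ) (KI : ℝ → ℝ → ℝ)
    (Q : ℝ → ℝ → ℝ → ℝ) (q : ℝ → ℝ → ℝ) (nS nI : ℝ → ℝ → ℝ) (t v : ℝ) : ℝ :=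
  nI 0 v + ∫ s in (0:ℝ)..t, mesoFI rA rB vA vB θX θV KI Q q nS nI s v

/-- The `A`-norm `‖(u,w)‖_A = ‖u‖_{L¹(R)} + ‖w‖_{L¹(V)}`. -/
noncomputable def normA (rA rB vA vB : ℝ) (u w : ℝ → ℝ) : ℝ :=
  (∫ r in Icc rA rB, |u r|) + ∫ v in Icc vA vB, |w v|

/-- The `B`-norm `‖n‖_B = sup_{t ∈ [0,T]} ‖n(t)‖_A`. -/
noncomputable def normB (rA rB vA vB T : ℝ) (nS nI : ℝ → ℝ → ℝ) : ℝ :=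
  sSup ((fun t => normA rA rB vA vB (nS t) (nI t)) '' Icc 0 T)

open Function
open scoped Topology

section Kernel

variable {X Y : Type*} [MeasurableSpace X] [MeasurableSpace Y] {μ : Measure X} {ν : Measure Y}

lemma integral_abs_le_of_lintegral_enorm_le {g : X → ℝ} {f : Y → ℝ}
    (hg : AEStronglyMeasurable g μ) (hf : Integrable f ν)
    (h : ∫⁻ x, ‖g x‖ₑ ∂μ ≤ ∫⁻ y, ‖f y‖ₑ ∂ν) : ∫ x, |g x| ∂μ ≤ ∫ y, |f y| ∂ν := by
  simp only [← Real.norm_eq_abs, integral_norm_eq_lintegral_enorm hg,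
    integral_norm_eq_lintegral_enorm hf.1]
  exact ENNReal.toReal_mono hf.2.ne h

lemma lintegral_enorm_eq_one {f : X → ℝ} (hf0 : ∀ x, 0 ≤ f x) (hf1 : ∫ x, f x ∂μ = 1) :
    ∫⁻ x, ‖f x‖ₑ ∂μ = 1 := by
  have hf : Integrable f μ := .of_integral_ne_zero (by simp [hf1])
  rw [← ofReal_integral_norm_eq_lintegral_enorm hf]
  simp [Real.norm_of_nonneg (hf0 _), hf1]

lemma integral_abs_le_of_ae_eq_add {f g h : X → ℝ} {a b : ℝ} (hg : Integrable g μ)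
    (hh : Integrable h μ) (hf : ∀ᵐ x ∂μ, f x = a * g x + b * h x) :
    ∫ x, |f x| ∂μ ≤ |a| * ∫ x, |g x| ∂μ + |b| * ∫ x, |h x| ∂μ := by
  rw [← integral_const_mul, ← integral_const_mul,
    ← integral_add (hg.abs.const_mul _) (hh.abs.const_mul _)]
  refine integral_mono_of_nonneg (.of_forall fun _ => abs_nonneg _)
    ((hg.abs.const_mul _).add (hh.abs.const_mul _)) (hf.mono fun x hx => ?_)
  dsimp only
  rw [hx, ← abs_mul, ← abs_mul]
  exact abs_add_le _ _

lemma abs_integral_mul_le {q f : Y → ℝ} (hq : ∀ y, |q y| ≤ 1) (hf : Integrable f ν) :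
    |∫ y, q y * f y ∂ν| ≤ ∫ y, |f y| ∂ν :=
  abs_integral_le_integral_abs.trans <| integral_mono_of_nonneg
    (.of_forall fun _ => abs_nonneg _) hf.abs
    (.of_forall fun y => by
      simp only [abs_mul]; exact mul_le_of_le_one_left (abs_nonneg _) (hq y))

variable [SFinite ν]

lemma measurable_integral_mul {S : Type*} [MeasurableSpace S] {K : X → Y → ℝ}
    (hK : Measurable (uncurry K)) {f : S → Y → ℝ} (hf : Measurable (uncurry f)) :
    Measurable fun p : S × X => ∫ y, K p.2 y * f p.1 y ∂ν := by
  have : Measurable fun z : (S × X) × Y => K z.1.2 z.2 * f z.1.1 z.2 := by fun_prop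
  exact this.stronglyMeasurable.integral_prod_right'.measurable

section Bounded

variable {q : X → Y → ℝ} (hq1 : ∀ x y, |q x y| ≤ 1) {b : X → ℝ} {c : Y → ℝ}
  (hb : Integrable b μ) (hc : Integrable c ν)
include hq1 hb hc

lemma integrable_mul_integral_mul (hq : Measurable (uncurry q)) :
    Integrable (fun x => b x * ∫ y, q x y * c y ∂ν) μ :=
  hb.mul_bdd (hq.aestronglyMeasurable.mul hc.1.comp_snd).integral_prod_right'
    (.of_forall fun x => abs_integral_mul_le (hq1 x) hc)

omit [SFinite ν] in
lemma integral_abs_mul_integral_mul_le :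
    ∫ x, |b x * ∫ y, q x y * c y ∂ν| ∂μ ≤ (∫ x, |b x| ∂μ) * ∫ y, |c y| ∂ν := by
  rw [← integral_mul_const]
  refine integral_mono_of_nonneg (.of_forall fun _ => abs_nonneg _) (hb.abs.mul_const _)
    (.of_forall fun x => ?_)
  simp only [abs_mul]
  exact mul_le_mul_of_nonneg_left (abs_integral_mul_le (hq1 x) hc) (abs_nonneg _)

lemma integral_abs_mul_integral_mul_sub_le (hq : Measurable (uncurry q)) {b' : X → ℝ}
    {c' : Y → ℝ} (hb' : Integrable b' μ) (hc' : Integrable c' ν) :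
    ∫ x, |b x * ∫ y, q x y * c y ∂ν - b' x * ∫ y, q x y * c' y ∂ν| ∂μ
      ≤ (∫ x, |b x - b' x| ∂μ) * (∫ y, |c y| ∂ν)
        + (∫ x, |b' x| ∂μ) * ∫ y, |c y - c' y| ∂ν := by
  have hqc : ∀ {c : Y → ℝ}, Integrable c ν → ∀ x, Integrable (fun y => q x y * c y) ν :=
    fun hc x => hc.bdd_mul hq.of_uncurry_left.aestronglyMeasurable
      (.of_forall fun y => (Real.norm_eq_abs _).trans_le (hq1 x y))
  have hsplit : ∀ x, b x * ∫ y, q x y * c y ∂ν - b' x * ∫ y, q x y * c' y ∂ν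
      = 1 * ((b x - b' x) * ∫ y, q x y * c y ∂ν)
        + 1 * (b' x * ∫ y, q x y * (c y - c' y) ∂ν) := fun x => by
    simp only [mul_sub, integral_sub (hqc hc x) (hqc hc' x)]
    ring
  refine (integral_abs_le_of_ae_eq_add (integrable_mul_integral_mul hq1 (hb.sub hb') hc hq)
    (integrable_mul_integral_mul hq1 hb' (hc.sub hc') hq) (.of_forall hsplit)).trans ?_
  rw [abs_one, one_mul, one_mul]
  exact add_le_add (integral_abs_mul_integral_mul_le hq1 (hb.sub hb') hc)
    (integral_abs_mul_integral_mul_le hq1 hb' (hc.sub hc'))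

end Bounded

variable [SFinite μ]

lemma integral_abs_mul_prod_sub_le {a a' : X → ℝ} {c c' : Y → ℝ} (ha : Integrable a μ)
    (ha' : Integrable a' μ) (hc : Integrable c ν) (hc' : Integrable c' ν) :
    ∫ p, |a p.1 * c p.2 - a' p.1 * c' p.2| ∂(μ.prod ν)
      ≤ (∫ x, |a x - a' x| ∂μ) * (∫ y, |c y| ∂ν)
        + (∫ x, |a' x| ∂μ) * ∫ y, |c y - c' y| ∂ν := by
  have h₁ : Integrable (fun p : X × Y => |a p.1 - a' p.1| * |c p.2|) (μ.prod ν) :=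
    (ha.sub ha').abs.mul_prod hc.abs
  have h₂ : Integrable (fun p : X × Y => |a' p.1| * |c p.2 - c' p.2|) (μ.prod ν) :=
    ha'.abs.mul_prod (hc.sub hc').abs
  rw [← integral_prod_mul, ← integral_prod_mul, ← integral_add h₁ h₂]
  refine integral_mono_of_nonneg (.of_forall fun _ => abs_nonneg _) (h₁.add h₂)
    (.of_forall fun p => ?_)
  calc |a p.1 * c p.2 - a' p.1 * c' p.2|
      = |(a p.1 - a' p.1) * c p.2 + a' p.1 * (c p.2 - c' p.2)| := by ring_nf
    _ ≤ _ := (abs_add_le _ _).trans_eq (by simp only [abs_mul])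

section Substochastic

variable {K : X → Y → ℝ} (hK : Measurable (uncurry K)) (hK1 : ∀ᵐ y ∂ν, ∫⁻ x, ‖K x y‖ₑ ∂μ ≤ 1)
  {f : Y → ℝ}
include hK hK1

lemma lintegral_enorm_kernel_mul_le (hf : AEStronglyMeasurable f ν) :
    ∫⁻ p, ‖K p.1 p.2 * f p.2‖ₑ ∂(μ.prod ν) ≤ ∫⁻ y, ‖f y‖ₑ ∂ν := by
  rw [lintegral_prod_symm (fun p => ‖K p.1 p.2 * f p.2‖ₑ)
    (hK.aestronglyMeasurable.mul hf.comp_snd).enorm]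
  refine lintegral_mono_ae (hK1.mono fun y hy => ?_)
  simp only [enorm_mul]
  rw [lintegral_mul_const' _ _ enorm_ne_top]
  exact mul_le_of_le_one_left bot_le hy

variable (hf : Integrable f ν)
include hf

lemma integrable_kernel_mul : Integrable (fun p : X × Y => K p.1 p.2 * f p.2) (μ.prod ν) :=
  ⟨hK.aestronglyMeasurable.mul hf.1.comp_snd,
    (lintegral_enorm_kernel_mul_le hK hK1 hf.1).trans_lt hf.2⟩

lemma integrable_integral_kernel_mul : Integrable (fun x => ∫ y, K x y * f y ∂ν) μ :=
  (integrable_kernel_mul hK hK1 hf).integral_prod_left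

lemma integral_abs_integral_kernel_mul_le :
    ∫ x, |∫ y, K x y * f y ∂ν| ∂μ ≤ ∫ y, |f y| ∂ν := by
  refine integral_abs_le_of_lintegral_enorm_le
    (integrable_integral_kernel_mul hK hK1 hf).1 hf ?_
  calc ∫⁻ x, ‖∫ y, K x y * f y ∂ν‖ₑ ∂μ ≤ ∫⁻ x, ∫⁻ y, ‖K x y * f y‖ₑ ∂ν ∂μ :=
        lintegral_mono fun _ => enorm_integral_le_lintegral_enorm _
    _ = ∫⁻ p, ‖K p.1 p.2 * f p.2‖ₑ ∂(μ.prod ν) :=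
        (lintegral_prod _ (integrable_kernel_mul hK hK1 hf).1.enorm).symm
    _ ≤ _ := lintegral_enorm_kernel_mul_le hK hK1 hf.1

lemma ae_integral_kernel_mul_sub {g : Y → ℝ} (hg : Integrable g ν) :
    ∀ᵐ x ∂μ, ∫ y, K x y * (f y - g y) ∂ν = ∫ y, K x y * f y ∂ν - ∫ y, K x y * g y ∂ν := by
  filter_upwards [(integrable_kernel_mul hK hK1 hf).prod_right_ae,
    (integrable_kernel_mul hK hK1 hg).prod_right_ae] with x hfx hgx
  simp only [mul_sub, integral_sub hfx hgx]

lemma integral_abs_integral_kernel_mul_sub_integral_le {g : Y → ℝ} (hg : Integrable g ν) :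
    ∫ x, |∫ y, K x y * f y ∂ν - ∫ y, K x y * g y ∂ν| ∂μ ≤ ∫ y, |f y - g y| ∂ν := by
  calc ∫ x, |∫ y, K x y * f y ∂ν - ∫ y, K x y * g y ∂ν| ∂μ
      = ∫ x, |∫ y, K x y * (f y - g y) ∂ν| ∂μ :=
        integral_congr_ae ((ae_integral_kernel_mul_sub hK hK1 hf hg).mono fun x hx => by
          dsimp only; rw [hx])
    _ ≤ _ := integral_abs_integral_kernel_mul_le hK hK1 (hf.sub hg)

end Substochastic

lemma integral_abs_integral_kernel_mul_sub_self_le {K : X → X → ℝ} (hK : Measurable (uncurry K))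
    (hK1 : ∀ᵐ y ∂μ, ∫⁻ x, ‖K x y‖ₑ ∂μ ≤ 1) {f : X → ℝ} (hf : Integrable f μ) :
    ∫ x, |∫ y, K x y * f y ∂μ - f x| ∂μ ≤ 2 * ∫ x, |f x| ∂μ := by
  refine (integral_abs_le_of_ae_eq_add (a := 1) (b := -1)
    (integrable_integral_kernel_mul hK hK1 hf) hf (.of_forall fun x => by ring)).trans ?_
  rw [abs_neg, abs_one, one_mul, one_mul, two_mul]
  exact add_le_add_left (integral_abs_integral_kernel_mul_le hK hK1 hf) _

end Kernel

section L1Path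

variable {X : Type*} [MeasurableSpace X]

/-- A jointly measurable representative of a continuous path `[0, T] → L¹(μ)`. -/
structure IsL1Path (μ : Measure X) (T : ℝ) (f : ℝ → X → ℝ) : Prop where
  measurable : Measurable (uncurry f)
  integrable : ∀ t ∈ Icc 0 T, Integrable (f t) μ
  tendsto : ∀ t₀ ∈ Icc 0 T,
    Tendsto (fun t => ∫ x, |f t x - f t₀ x| ∂μ) (𝓝[Icc 0 T] t₀) (𝓝 0)

namespace IsL1Path

variable {μ : Measure X} {T : ℝ} {f g : ℝ → X → ℝ}

lemma sub (hf : IsL1Path μ T f) (hg : IsL1Path μ T g) :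
    IsL1Path μ T fun t x => f t x - g t x where
  measurable := hf.measurable.sub hg.measurable
  integrable t ht := (hf.integrable t ht).sub (hg.integrable t ht)
  tendsto t₀ ht₀ := by
    refine squeeze_zero' (.of_forall fun _ => integral_nonneg fun _ => abs_nonneg _) ?_
      (by simpa using (hf.tendsto t₀ ht₀).add (hg.tendsto t₀ ht₀))
    filter_upwards [self_mem_nhdsWithin] with t ht
    have hfi : Integrable (fun x => |f t x - f t₀ x|) μ :=
      ((hf.integrable t ht).sub (hf.integrable t₀ ht₀)).abs
    have hgi : Integrable (fun x => |g t x - g t₀ x|) μ :=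
      ((hg.integrable t ht).sub (hg.integrable t₀ ht₀)).abs
    rw [← integral_add hfi hgi]
    refine integral_mono_of_nonneg (.of_forall fun _ => abs_nonneg _) (hfi.add hgi)
      (.of_forall fun x => ?_)
    simp only [sub_sub_sub_comm (f t x)]
    exact abs_sub _ _

lemma continuousOn_integral_abs (hf : IsL1Path μ T f) :
    ContinuousOn (fun t => ∫ x, |f t x| ∂μ) (Icc 0 T) := by
  intro t₀ ht₀
  rw [ContinuousWithinAt, ← tendsto_sub_nhds_zero_iff]
  refine squeeze_zero_norm' ?_ (hf.tendsto t₀ ht₀)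
  filter_upwards [self_mem_nhdsWithin] with t ht
  rw [Real.norm_eq_abs, ← integral_sub (hf.integrable t ht).abs (hf.integrable t₀ ht₀).abs]
  exact abs_integral_le_integral_abs.trans <| integral_mono_of_nonneg
    (.of_forall fun _ => abs_nonneg _) ((hf.integrable t ht).sub (hf.integrable t₀ ht₀)).abs
    (.of_forall fun x => abs_abs_sub_abs_le_abs_sub _ _)

end IsL1Path

end L1Path

section Norms

variable {rA rB vA vB T : ℝ}

lemma normA_nonneg (u w : ℝ → ℝ) : 0 ≤ normA rA rB vA vB u w :=
  add_nonneg (integral_nonneg fun _ => abs_nonneg _) (integral_nonneg fun _ => abs_nonneg _)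

lemma normA_congr {u u' w w' : ℝ → ℝ} (hu : EqOn u u' (Icc rA rB)) (hw : EqOn w w' (Icc vA vB)) :
    normA rA rB vA vB u w = normA rA rB vA vB u' w' := by
  unfold normA
  congr 1
  · exact setIntegral_congr_fun measurableSet_Icc fun r hr => by rw [hu hr]
  · exact setIntegral_congr_fun measurableSet_Icc fun v hv => by rw [hw hv]

lemma normA_le_normB {nS nI : ℝ → ℝ → ℝ} (hS : IsL1Path (volume.restrict (Icc rA rB)) T nS)
    (hI : IsL1Path (volume.restrict (Icc vA vB)) T nI) {t : ℝ} (ht : t ∈ Icc 0 T) :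
    normA rA rB vA vB (nS t) (nI t) ≤ normB rA rB vA vB T nS nI :=
  le_csSup (isCompact_Icc.image_of_continuousOn
    (hS.continuousOn_integral_abs.add hI.continuousOn_integral_abs)).bddAbove
    (mem_image_of_mem _ ht)

end Norms

section Time

variable {X : Type*} [MeasurableSpace X] {μ : Measure X} [SFinite μ] {t : ℝ}

lemma integrable_restrict_Ioc_prod {G : ℝ → X → ℝ} (hG : Measurable (uncurry G)) {C : ℝ}
    (hGint : ∀ s ∈ Ioc 0 t, Integrable (G s) μ) (hGC : ∀ s ∈ Ioc 0 t, ∫ x, |G s x| ∂μ ≤ C) :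
    Integrable (uncurry G) ((volume.restrict (Ioc 0 t)).prod μ) := by
  refine (integrable_prod_iff hG.aestronglyMeasurable).2
    ⟨ae_restrict_of_forall_mem measurableSet_Ioc hGint, ?_⟩
  refine .of_bound hG.norm.stronglyMeasurable.integral_prod_right'.aestronglyMeasurable C
    (ae_restrict_of_forall_mem measurableSet_Ioc fun s hs => ?_)
  rw [Real.norm_of_nonneg (integral_nonneg fun _ => norm_nonneg _)]
  exact hGC s hs

variable {G₁ G₂ : ℝ → X → ℝ} (ht : 0 ≤ t)
  (h₁ : Integrable (uncurry G₁) ((volume.restrict (Ioc 0 t)).prod μ))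
  (h₂ : Integrable (uncurry G₂) ((volume.restrict (Ioc 0 t)).prod μ))
include ht h₁ h₂

lemma intervalIntegrable_integral_abs_sub :
    IntervalIntegrable (fun s => ∫ x, |G₁ s x - G₂ s x| ∂μ) volume 0 t :=
  (intervalIntegrable_iff_integrableOn_Ioc_of_le ht).2 (h₁.sub h₂).integral_norm_prod_left

lemma integral_abs_intervalIntegral_sub_le :
    ∫ x, |(∫ s in 0..t, G₁ s x) - ∫ s in 0..t, G₂ s x| ∂μ
      ≤ ∫ s in 0..t, ∫ x, |G₁ s x - G₂ s x| ∂μ := by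
  have h : Integrable (uncurry fun s x => G₁ s x - G₂ s x)
      ((volume.restrict (Ioc 0 t)).prod μ) := h₁.sub h₂
  simp only [intervalIntegral.integral_of_le ht]
  calc ∫ x, |(∫ s in Ioc 0 t, G₁ s x) - ∫ s in Ioc 0 t, G₂ s x| ∂μ
      = ∫ x, |∫ s in Ioc 0 t, (G₁ s x - G₂ s x)| ∂μ := by
        refine integral_congr_ae ?_
        filter_upwards [h₁.prod_left_ae, h₂.prod_left_ae] with x hx₁ hx₂
        exact congrArg _ (integral_sub hx₁ hx₂).symm
    _ ≤ ∫ x, (∫ s in Ioc 0 t, |G₁ s x - G₂ s x|) ∂μ :=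
        integral_mono_of_nonneg (.of_forall fun _ => abs_nonneg _)
          h.integral_norm_prod_right (.of_forall fun _ => abs_integral_le_integral_abs)
    _ = ∫ s in Ioc 0 t, ∫ x, |G₁ s x - G₂ s x| ∂μ :=
        (integral_integral_swap (f := fun s x => |G₁ s x - G₂ s x|) h.abs).symm

end Time

lemma lipschitz_sum_le {θX θR θV a c a' c' da dc Bn Bm Bd : ℝ} (hθX : 0 ≤ θX) (hθR : 0 ≤ θR)
    (ha : 0 ≤ a) (hc : 0 ≤ c) (ha' : 0 ≤ a') (hc' : 0 ≤ c') (hda : 0 ≤ da)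
    (hdc : 0 ≤ dc) (hn : a + c ≤ Bn) (hm : a' + c' ≤ Bm) (hd : da + dc ≤ Bd) :
    θX * (da * c + a' * dc) + 2 * θR * da + (θX * (da * c + a' * dc) + 2 * θV * dc)
      ≤ 2 * (max θR θV + θX * (Bn + Bm)) * Bd := by
  have hbil : da * c + a' * dc ≤ (Bn + Bm) * Bd := by nlinarith
  have hlin : θR * da + θV * dc ≤ max θR θV * Bd := by
    nlinarith [le_max_left θR θV, le_max_right θR θV]
  nlinarith [mul_le_mul_of_nonneg_left hbil hθX]

section Model

variable {rA rB vA vB θX θR θV : ℝ} {KS KI q : ℝ → ℝ → ℝ} {Q : ℝ → ℝ → ℝ → ℝ}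
  {nS nI mS mI : ℝ → ℝ → ℝ} {s : ℝ}

lemma mesoFS_zero (r : ℝ) : mesoFS rA rB vA vB θX θR KS q 0 0 s r = 0 := by
  simp [mesoFS]

lemma mesoFI_zero (v : ℝ) : mesoFI rA rB vA vB θX θV KI Q q 0 0 s v = 0 := by
  simp [mesoFI]

lemma measurable_uncurry_mesoFS (hKS : Measurable (uncurry KS)) (hq : Measurable (uncurry q))
    (hnS : Measurable (uncurry nS)) (hnI : Measurable (uncurry nI)) :
    Measurable (uncurry (mesoFS rA rB vA vB θX θR KS q nS nI)) := by
  have h₁ := measurable_integral_mul (ν := volume.restrict (Icc vA vB)) hq hnI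
  have h₂ := measurable_integral_mul (ν := volume.restrict (Icc rA rB)) hKS hnS
  exact (((hnS.const_mul θX).mul h₁).neg.add (h₂.const_mul θR)).sub (hnS.const_mul θR)

lemma measurable_uncurry_mesoFI (hKI : Measurable (uncurry KI)) (hq : Measurable (uncurry q))
    (hQ : Measurable fun p : ℝ × ℝ × ℝ => Q p.1 p.2.1 p.2.2)
    (hnS : Measurable (uncurry nS)) (hnI : Measurable (uncurry nI)) :
    Measurable (uncurry (mesoFI rA rB vA vB θX θV KI Q q nS nI)) := by
  have hQ' : Measurable fun z : ((ℝ × ℝ) × ℝ) × ℝ => Q z.1.1.2 z.1.2 z.2 :=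
    hQ.comp (f := fun z : ((ℝ × ℝ) × ℝ) × ℝ => (z.1.1.2, z.1.2, z.2)) (by fun_prop)
  have h₀ : Measurable fun z : ((ℝ × ℝ) × ℝ) × ℝ =>
      q z.1.2 z.2 * Q z.1.1.2 z.1.2 z.2 * nS z.1.1.1 z.1.2 * nI z.1.1.1 z.2 := by fun_prop
  have h₁ := h₀.stronglyMeasurable.integral_prod_right' (ν := volume.restrict (Icc vA vB))
  have h₂ := h₁.integral_prod_right' (ν := volume.restrict (Icc rA rB))
  have h₃ := measurable_integral_mul (ν := volume.restrict (Icc vA vB)) hKI hnI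
  unfold mesoFI
  exact ((h₂.measurable.const_mul θX).add (h₃.const_mul θV)).sub (hnI.const_mul θV)

section Susceptible

variable (hKS : Measurable (uncurry KS))
  (hKS1 : ∀ r' ∈ Icc rA rB, ∫⁻ r in Icc rA rB, ‖KS r r'‖ₑ ≤ 1)
  (hq : Measurable (uncurry q)) (hq1 : ∀ r v, |q r v| ≤ 1)
  (hnS : IntegrableOn (nS s) (Icc rA rB)) (hnI : IntegrableOn (nI s) (Icc vA vB))
include hKS hKS1 hq hq1 hnS hnI

lemma integrableOn_mesoFS :
    IntegrableOn (mesoFS rA rB vA vB θX θR KS q nS nI s) (Icc rA rB) := by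
  refine ((((integrable_mul_integral_mul hq1 hnS hnI hq).const_mul θX).neg.add
    ((integrable_integral_kernel_mul hKS
      (ae_restrict_of_forall_mem (μ := volume) measurableSet_Icc hKS1) hnS).const_mul θR)).sub
    (hnS.const_mul θR)).congr (.of_forall fun r => ?_)
  simp only [mesoFS, Pi.add_apply, Pi.sub_apply, Pi.neg_apply]
  ring

lemma integral_abs_mesoFS_sub_le (hθX : 0 ≤ θX) (hθR : 0 ≤ θR)
    (hmS : IntegrableOn (mS s) (Icc rA rB)) (hmI : IntegrableOn (mI s) (Icc vA vB)) :
    ∫ r in Icc rA rB, |mesoFS rA rB vA vB θX θR KS q nS nI s r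
        - mesoFS rA rB vA vB θX θR KS q mS mI s r|
      ≤ θX * ((∫ r in Icc rA rB, |nS s r - mS s r|) * (∫ v in Icc vA vB, |nI s v|)
          + (∫ r in Icc rA rB, |mS s r|) * ∫ v in Icc vA vB, |nI s v - mI s v|)
        + 2 * θR * ∫ r in Icc rA rB, |nS s r - mS s r| := by
  have hK1 := ae_restrict_of_forall_mem (μ := volume) measurableSet_Icc hKS1
  have hsplit : ∀ᵐ r ∂(volume.restrict (Icc rA rB)),
      mesoFS rA rB vA vB θX θR KS q nS nI s r - mesoFS rA rB vA vB θX θR KS q mS mI s r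
        = -θX * (nS s r * (∫ v in Icc vA vB, q r v * nI s v)
            - mS s r * ∫ v in Icc vA vB, q r v * mI s v)
          + θR * ((∫ r' in Icc rA rB, KS r r' * (nS s r' - mS s r')) - (nS s r - mS s r)) := by
    filter_upwards [ae_integral_kernel_mul_sub hKS hK1 hnS hmS] with r hr
    simp only [mesoFS, hr]
    ring
  have hbil := integral_abs_mul_integral_mul_sub_le hq1 hnS hnI hq hmS hmI
  have hlin := integral_abs_integral_kernel_mul_sub_self_le hKS hK1 (hnS.sub hmS)
  refine (integral_abs_le_of_ae_eq_add ((integrable_mul_integral_mul hq1 hnS hnI hq).sub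
    (integrable_mul_integral_mul hq1 hmS hmI hq))
    ((integrable_integral_kernel_mul hKS hK1 (hnS.sub hmS)).sub (hnS.sub hmS)) hsplit).trans ?_
  simp only [Pi.sub_apply] at hlin ⊢
  rw [abs_neg, abs_of_nonneg hθX, abs_of_nonneg hθR]
  nlinarith [mul_le_mul_of_nonneg_left hbil hθX, mul_le_mul_of_nonneg_left hlin hθR]

lemma integral_abs_mesoFS_le (hθX : 0 ≤ θX) (hθR : 0 ≤ θR) :
    ∫ r in Icc rA rB, |mesoFS rA rB vA vB θX θR KS q nS nI s r|
      ≤ θX * ((∫ r in Icc rA rB, |nS s r|) * ∫ v in Icc vA vB, |nI s v|)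
        + 2 * θR * ∫ r in Icc rA rB, |nS s r| := by
  simpa [mesoFS_zero] using integral_abs_mesoFS_sub_le hKS hKS1 hq hq1 hnS hnI hθX hθR
    (mS := 0) (mI := 0) (integrable_zero _ _ _) (integrable_zero _ _ _)

end Susceptible

section Infected

def infectionKernel (q : ℝ → ℝ → ℝ) (Q : ℝ → ℝ → ℝ → ℝ) (v : ℝ) (y : ℝ × ℝ) : ℝ :=
  q y.1 y.2 * Q v y.1 y.2

variable (hq : Measurable (uncurry q)) (hq1 : ∀ r v, |q r v| ≤ 1)
  (hQ : Measurable fun p : ℝ × ℝ × ℝ => Q p.1 p.2.1 p.2.2)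
  (hQ1 : ∀ r ∈ Icc rA rB, ∀ vs ∈ Icc vA vB, ∫⁻ v in Icc vA vB, ‖Q v r vs‖ₑ ≤ 1)
include hq hq1 hQ hQ1

omit hq1 hQ1 in
lemma measurable_uncurry_infectionKernel :
    Measurable (uncurry (infectionKernel q Q)) :=
  (hq.comp measurable_snd).mul hQ

omit hq hQ in
lemma ae_lintegral_enorm_infectionKernel_le :
    ∀ᵐ y ∂(volume.restrict (Icc rA rB)).prod (volume.restrict (Icc vA vB)),
      ∫⁻ v in Icc vA vB, ‖infectionKernel q Q v y‖ₑ ≤ 1 := by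
  rw [Measure.prod_restrict]
  refine ae_restrict_of_forall_mem (measurableSet_Icc.prod measurableSet_Icc) fun y hy => ?_
  simp only [infectionKernel, enorm_mul]
  rw [lintegral_const_mul' _ _ enorm_ne_top]
  exact mul_le_one' (by simpa [Real.enorm_eq_ofReal_abs] using hq1 y.1 y.2)
    (hQ1 y.1 hy.1 y.2 hy.2)

variable (hnS : IntegrableOn (nS s) (Icc rA rB)) (hnI : IntegrableOn (nI s) (Icc vA vB))
include hnS hnI

lemma mesoFI_ae_eq : mesoFI rA rB vA vB θX θV KI Q q nS nI s =ᵐ[volume.restrict (Icc vA vB)]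
    fun v => θX * ∫ y, infectionKernel q Q v y * (nS s y.1 * nI s y.2)
        ∂(volume.restrict (Icc rA rB)).prod (volume.restrict (Icc vA vB))
      + θV * (∫ v' in Icc vA vB, KI v v' * nI s v') - θV * nI s v := by
  filter_upwards [(integrable_kernel_mul (measurable_uncurry_infectionKernel hq hQ)
    (ae_lintegral_enorm_infectionKernel_le hq1 hQ1) (hnS.mul_prod hnI)).prod_right_ae] with v hv
  rw [mesoFI, integral_prod _ hv]
  simp only [infectionKernel, mul_assoc]

variable (hKI : Measurable (uncurry KI))
  (hKI1 : ∀ v' ∈ Icc vA vB, ∫⁻ v in Icc vA vB, ‖KI v v'‖ₑ ≤ 1)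
include hKI hKI1

lemma integrableOn_mesoFI :
    IntegrableOn (mesoFI rA rB vA vB θX θV KI Q q nS nI s) (Icc vA vB) :=
  ((((integrable_integral_kernel_mul (measurable_uncurry_infectionKernel hq hQ)
    (ae_lintegral_enorm_infectionKernel_le hq1 hQ1) (hnS.mul_prod hnI)).const_mul θX).add
    ((integrable_integral_kernel_mul hKI (ae_restrict_of_forall_mem (μ := volume)
      measurableSet_Icc hKI1) hnI).const_mul θV)).sub (hnI.const_mul θV)).congr
    (mesoFI_ae_eq hq hq1 hQ hQ1 hnS hnI).symm

lemma integral_abs_mesoFI_sub_le (hθX : 0 ≤ θX) (hθV : 0 ≤ θV)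
    (hmS : IntegrableOn (mS s) (Icc rA rB)) (hmI : IntegrableOn (mI s) (Icc vA vB)) :
    ∫ v in Icc vA vB, |mesoFI rA rB vA vB θX θV KI Q q nS nI s v
        - mesoFI rA rB vA vB θX θV KI Q q mS mI s v|
      ≤ θX * ((∫ r in Icc rA rB, |nS s r - mS s r|) * (∫ v in Icc vA vB, |nI s v|)
          + (∫ r in Icc rA rB, |mS s r|) * ∫ v in Icc vA vB, |nI s v - mI s v|)
        + 2 * θV * ∫ v in Icc vA vB, |nI s v - mI s v| := by
  have hKQ := measurable_uncurry_infectionKernel hq hQ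
  have hKQ1 := ae_lintegral_enorm_infectionKernel_le hq1 hQ1
  have hK1 := ae_restrict_of_forall_mem (μ := volume) measurableSet_Icc hKI1
  have hsplit : ∀ᵐ v ∂(volume.restrict (Icc vA vB)),
      mesoFI rA rB vA vB θX θV KI Q q nS nI s v - mesoFI rA rB vA vB θX θV KI Q q mS mI s v
        = θX * ((∫ y, infectionKernel q Q v y * (nS s y.1 * nI s y.2)
              ∂(volume.restrict (Icc rA rB)).prod (volume.restrict (Icc vA vB)))
            - ∫ y, infectionKernel q Q v y * (mS s y.1 * mI s y.2)
              ∂(volume.restrict (Icc rA rB)).prod (volume.restrict (Icc vA vB)))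
          + θV * ((∫ v' in Icc vA vB, KI v v' * (nI s v' - mI s v')) - (nI s v - mI s v)) := by
    filter_upwards [mesoFI_ae_eq hq hq1 hQ hQ1 hnS hnI, mesoFI_ae_eq hq hq1 hQ hQ1 hmS hmI,
      ae_integral_kernel_mul_sub hKI hK1 hnI hmI] with v hn hm hk
    rw [hn, hm, hk]
    ring
  have hbil := (integral_abs_integral_kernel_mul_sub_integral_le hKQ hKQ1 (hnS.mul_prod hnI)
    (hmS.mul_prod hmI)).trans (integral_abs_mul_prod_sub_le hnS hmS hnI hmI)
  have hlin := integral_abs_integral_kernel_mul_sub_self_le hKI hK1 (hnI.sub hmI)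
  refine (integral_abs_le_of_ae_eq_add
    ((integrable_integral_kernel_mul hKQ hKQ1 (hnS.mul_prod hnI)).sub
      (integrable_integral_kernel_mul hKQ hKQ1 (hmS.mul_prod hmI)))
    ((integrable_integral_kernel_mul hKI hK1 (hnI.sub hmI)).sub (hnI.sub hmI)) hsplit).trans ?_
  simp only [Pi.sub_apply] at hlin ⊢
  rw [abs_of_nonneg hθX, abs_of_nonneg hθV]
  nlinarith [mul_le_mul_of_nonneg_left hbil hθX, mul_le_mul_of_nonneg_left hlin hθV]

lemma integral_abs_mesoFI_le (hθX : 0 ≤ θX) (hθV : 0 ≤ θV) :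
    ∫ v in Icc vA vB, |mesoFI rA rB vA vB θX θV KI Q q nS nI s v|
      ≤ θX * ((∫ r in Icc rA rB, |nS s r|) * ∫ v in Icc vA vB, |nI s v|)
        + 2 * θV * ∫ v in Icc vA vB, |nI s v| := by
  simpa [mesoFI_zero] using integral_abs_mesoFI_sub_le hq hq1 hQ hQ1 hnS hnI hKI hKI1 hθX hθV
    (mS := 0) (mI := 0) (integrable_zero _ _ _) (integrable_zero _ _ _)

end Infected

section Operator

variable {T t : ℝ}

lemma integrable_mesoFS_prod (hθX : 0 ≤ θX) (hθR : 0 ≤ θR) (hKS : Measurable (uncurry KS))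
    (hKS1 : ∀ r' ∈ Icc rA rB, ∫⁻ r in Icc rA rB, ‖KS r r'‖ₑ ≤ 1)
    (hq : Measurable (uncurry q)) (hq1 : ∀ r v, |q r v| ≤ 1)
    (hnS : IsL1Path (volume.restrict (Icc rA rB)) T nS)
    (hnI : IsL1Path (volume.restrict (Icc vA vB)) T nI) (htT : t ≤ T) :
    Integrable (uncurry (mesoFS rA rB vA vB θX θR KS q nS nI))
      ((volume.restrict (Ioc 0 t)).prod (volume.restrict (Icc rA rB))) := by
  have hsT : ∀ s ∈ Ioc 0 t, s ∈ Icc 0 T := fun s hs => ⟨hs.1.le, hs.2.trans htT⟩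
  set B := normB rA rB vA vB T nS nI
  refine integrable_restrict_Ioc_prod (C := θX * (B * B) + 2 * θR * B)
    (measurable_uncurry_mesoFS hKS hq hnS.measurable hnI.measurable)
    (fun s hs => integrableOn_mesoFS hKS hKS1 hq hq1 (hnS.integrable s (hsT s hs))
      (hnI.integrable s (hsT s hs))) fun s hs => ?_
  refine (integral_abs_mesoFS_le hKS hKS1 hq hq1 (hnS.integrable s (hsT s hs))
    (hnI.integrable s (hsT s hs)) hθX hθR).trans ?_
  have hB : normA rA rB vA vB (nS s) (nI s) ≤ B := normA_le_normB hnS hnI (hsT s hs)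
  have hS0 : 0 ≤ ∫ r in Icc rA rB, |nS s r| := integral_nonneg fun _ => abs_nonneg _
  have hI0 : 0 ≤ ∫ v in Icc vA vB, |nI s v| := integral_nonneg fun _ => abs_nonneg _
  unfold normA at hB
  gcongr <;> linarith

lemma integrable_mesoFI_prod (hθX : 0 ≤ θX) (hθV : 0 ≤ θV) (hKI : Measurable (uncurry KI))
    (hKI1 : ∀ v' ∈ Icc vA vB, ∫⁻ v in Icc vA vB, ‖KI v v'‖ₑ ≤ 1)
    (hQ : Measurable fun p : ℝ × ℝ × ℝ => Q p.1 p.2.1 p.2.2)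
    (hQ1 : ∀ r ∈ Icc rA rB, ∀ vs ∈ Icc vA vB, ∫⁻ v in Icc vA vB, ‖Q v r vs‖ₑ ≤ 1)
    (hq : Measurable (uncurry q)) (hq1 : ∀ r v, |q r v| ≤ 1)
    (hnS : IsL1Path (volume.restrict (Icc rA rB)) T nS)
    (hnI : IsL1Path (volume.restrict (Icc vA vB)) T nI) (htT : t ≤ T) :
    Integrable (uncurry (mesoFI rA rB vA vB θX θV KI Q q nS nI))
      ((volume.restrict (Ioc 0 t)).prod (volume.restrict (Icc vA vB))) := by
  have hsT : ∀ s ∈ Ioc 0 t, s ∈ Icc 0 T := fun s hs => ⟨hs.1.le, hs.2.trans htT⟩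
  set B := normB rA rB vA vB T nS nI
  refine integrable_restrict_Ioc_prod (C := θX * (B * B) + 2 * θV * B)
    (measurable_uncurry_mesoFI hKI hq hQ hnS.measurable hnI.measurable)
    (fun s hs => integrableOn_mesoFI hq hq1 hQ hQ1 (hnS.integrable s (hsT s hs))
      (hnI.integrable s (hsT s hs)) hKI hKI1) fun s hs => ?_
  refine (integral_abs_mesoFI_le hq hq1 hQ hQ1 (hnS.integrable s (hsT s hs))
    (hnI.integrable s (hsT s hs)) hKI hKI1 hθX hθV).trans ?_
  have hB : normA rA rB vA vB (nS s) (nI s) ≤ B := normA_le_normB hnS hnI (hsT s hs)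
  have hS0 : 0 ≤ ∫ r in Icc rA rB, |nS s r| := integral_nonneg fun _ => abs_nonneg _
  have hI0 : 0 ≤ ∫ v in Icc vA vB, |nI s v| := integral_nonneg fun _ => abs_nonneg _
  unfold normA at hB
  gcongr <;> linarith

lemma normA_mesoF_sub_le (hθX : 0 ≤ θX) (hθR : 0 ≤ θR) (hθV : 0 ≤ θV)
    (hKS : Measurable (uncurry KS)) (hKS1 : ∀ r' ∈ Icc rA rB, ∫⁻ r in Icc rA rB, ‖KS r r'‖ₑ ≤ 1)
    (hKI : Measurable (uncurry KI)) (hKI1 : ∀ v' ∈ Icc vA vB, ∫⁻ v in Icc vA vB, ‖KI v v'‖ₑ ≤ 1)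
    (hQ : Measurable fun p : ℝ × ℝ × ℝ => Q p.1 p.2.1 p.2.2)
    (hQ1 : ∀ r ∈ Icc rA rB, ∀ vs ∈ Icc vA vB, ∫⁻ v in Icc vA vB, ‖Q v r vs‖ₑ ≤ 1)
    (hq : Measurable (uncurry q)) (hq1 : ∀ r v, |q r v| ≤ 1)
    (hnS : IsL1Path (volume.restrict (Icc rA rB)) T nS)
    (hnI : IsL1Path (volume.restrict (Icc vA vB)) T nI)
    (hmS : IsL1Path (volume.restrict (Icc rA rB)) T mS)
    (hmI : IsL1Path (volume.restrict (Icc vA vB)) T mI) (hs : s ∈ Icc 0 T) :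
    normA rA rB vA vB
        (fun r => mesoFS rA rB vA vB θX θR KS q nS nI s r
          - mesoFS rA rB vA vB θX θR KS q mS mI s r)
        (fun v => mesoFI rA rB vA vB θX θV KI Q q nS nI s v
          - mesoFI rA rB vA vB θX θV KI Q q mS mI s v)
      ≤ 2 * (max θR θV + θX * (normB rA rB vA vB T nS nI + normB rA rB vA vB T mS mI))
          * normB rA rB vA vB T (fun t r => nS t r - mS t r) (fun t v => nI t v - mI t v) :=
  (add_le_add (integral_abs_mesoFS_sub_le hKS hKS1 hq hq1 (hnS.integrable s hs)
      (hnI.integrable s hs) hθX hθR (hmS.integrable s hs) (hmI.integrable s hs))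
    (integral_abs_mesoFI_sub_le hq hq1 hQ hQ1 (hnS.integrable s hs) (hnI.integrable s hs)
      hKI hKI1 hθX hθV (hmS.integrable s hs) (hmI.integrable s hs))).trans
  (lipschitz_sum_le hθX hθR (integral_nonneg fun _ => abs_nonneg _)
    (integral_nonneg fun _ => abs_nonneg _) (integral_nonneg fun _ => abs_nonneg _)
    (integral_nonneg fun _ => abs_nonneg _) (integral_nonneg fun _ => abs_nonneg _)
    (integral_nonneg fun _ => abs_nonneg _) (normA_le_normB hnS hnI hs)
    (normA_le_normB hmS hmI hs) (normA_le_normB (hnS.sub hmS) (hnI.sub hmI) hs))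

lemma normA_mesoP_sub_le (hθX : 0 ≤ θX) (hθR : 0 ≤ θR) (hθV : 0 ≤ θV)
    (hKS : Measurable (uncurry KS)) (hKS1 : ∀ r' ∈ Icc rA rB, ∫⁻ r in Icc rA rB, ‖KS r r'‖ₑ ≤ 1)
    (hKI : Measurable (uncurry KI)) (hKI1 : ∀ v' ∈ Icc vA vB, ∫⁻ v in Icc vA vB, ‖KI v v'‖ₑ ≤ 1)
    (hQ : Measurable fun p : ℝ × ℝ × ℝ => Q p.1 p.2.1 p.2.2)
    (hQ1 : ∀ r ∈ Icc rA rB, ∀ vs ∈ Icc vA vB, ∫⁻ v in Icc vA vB, ‖Q v r vs‖ₑ ≤ 1)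
    (hq : Measurable (uncurry q)) (hq1 : ∀ r v, |q r v| ≤ 1)
    (hnS : IsL1Path (volume.restrict (Icc rA rB)) T nS)
    (hnI : IsL1Path (volume.restrict (Icc vA vB)) T nI)
    (hmS : IsL1Path (volume.restrict (Icc rA rB)) T mS)
    (hmI : IsL1Path (volume.restrict (Icc vA vB)) T mI)
    (hinitS : nS 0 = mS 0) (hinitI : nI 0 = mI 0) (ht : t ∈ Icc 0 T) :
    normA rA rB vA vB
        (fun r => mesoPS rA rB vA vB θX θR KS q nS nI t r
          - mesoPS rA rB vA vB θX θR KS q mS mI t r)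
        (fun v => mesoPI rA rB vA vB θX θV KI Q q nS nI t v
          - mesoPI rA rB vA vB θX θV KI Q q mS mI t v)
      ≤ 2 * T * (max θR θV
            + θX * (normB rA rB vA vB T nS nI + normB rA rB vA vB T mS mI))
          * normB rA rB vA vB T (fun t r => nS t r - mS t r) (fun t v => nI t v - mI t v) := by
  set D := 2 * (max θR θV + θX * (normB rA rB vA vB T nS nI + normB rA rB vA vB T mS mI))
    * normB rA rB vA vB T (fun t r => nS t r - mS t r) (fun t v => nI t v - mI t v)
  have hslice : ∀ s ∈ Icc 0 T, normA rA rB vA vB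
      (fun r => mesoFS rA rB vA vB θX θR KS q nS nI s r
        - mesoFS rA rB vA vB θX θR KS q mS mI s r)
      (fun v => mesoFI rA rB vA vB θX θV KI Q q nS nI s v
        - mesoFI rA rB vA vB θX θV KI Q q mS mI s v) ≤ D := fun s hs =>
    normA_mesoF_sub_le hθX hθR hθV hKS hKS1 hKI hKI1 hQ hQ1 hq hq1 hnS hnI hmS hmI hs
  have hD : 0 ≤ D := (normA_nonneg _ _).trans (hslice 0 ⟨le_rfl, ht.1.trans ht.2⟩)
  have hFSn := integrable_mesoFS_prod hθX hθR hKS hKS1 hq hq1 hnS hnI ht.2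
  have hFSm := integrable_mesoFS_prod hθX hθR hKS hKS1 hq hq1 hmS hmI ht.2
  have hFIn := integrable_mesoFI_prod hθX hθV hKI hKI1 hQ hQ1 hq hq1 hnS hnI ht.2
  have hFIm := integrable_mesoFI_prod hθX hθV hKI hKI1 hQ hQ1 hq hq1 hmS hmI ht.2
  unfold normA
  simp only [mesoPS, mesoPI, hinitS, hinitI, add_sub_add_left_eq_sub]
  refine (add_le_add (integral_abs_intervalIntegral_sub_le ht.1 hFSn hFSm)
    (integral_abs_intervalIntegral_sub_le ht.1 hFIn hFIm)).trans ?_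
  rw [← intervalIntegral.integral_add (intervalIntegrable_integral_abs_sub ht.1 hFSn hFSm)
    (intervalIntegrable_integral_abs_sub ht.1 hFIn hFIm)]
  refine (intervalIntegral.integral_mono_on ht.1
    ((intervalIntegrable_integral_abs_sub ht.1 hFSn hFSm).add
      (intervalIntegrable_integral_abs_sub ht.1 hFIn hFIm)) intervalIntegrable_const
    fun s hs => hslice s ⟨hs.1, hs.2.trans ht.2⟩).trans ?_
  rw [intervalIntegral.integral_const, sub_zero, smul_eq_mul]
  nlinarith [mul_le_mul_of_nonneg_right ht.2 hD]

lemma normA_mesoP_sub_congr {q' : ℝ → ℝ → ℝ}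
    (h : ∀ r ∈ Icc rA rB, ∀ v ∈ Icc vA vB, q r v = q' r v) (t : ℝ) :
    normA rA rB vA vB
        (fun r => mesoPS rA rB vA vB θX θR KS q nS nI t r
          - mesoPS rA rB vA vB θX θR KS q mS mI t r)
        (fun v => mesoPI rA rB vA vB θX θV KI Q q nS nI t v
          - mesoPI rA rB vA vB θX θV KI Q q mS mI t v)
      = normA rA rB vA vB
        (fun r => mesoPS rA rB vA vB θX θR KS q' nS nI t r
          - mesoPS rA rB vA vB θX θR KS q' mS mI t r)
        (fun v => mesoPI rA rB vA vB θX θV KI Q q' nS nI t v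
          - mesoPI rA rB vA vB θX θV KI Q q' mS mI t v) := by
  have hS : ∀ (nS nI : ℝ → ℝ → ℝ) (s : ℝ), ∀ r ∈ Icc rA rB,
      mesoFS rA rB vA vB θX θR KS q nS nI s r = mesoFS rA rB vA vB θX θR KS q' nS nI s r := by
    intro nS nI s r hr
    rw [mesoFS, mesoFS, setIntegral_congr_fun measurableSet_Icc
      (f := fun v => q r v * nI s v) (g := fun v => q' r v * nI s v)
      fun v hv => by simp only [h r hr v hv]]
  have hI : ∀ (nS nI : ℝ → ℝ → ℝ) (s v : ℝ),
      mesoFI rA rB vA vB θX θV KI Q q nS nI s v = mesoFI rA rB vA vB θX θV KI Q q' nS nI s v := by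
    intro nS nI s v
    rw [mesoFI, mesoFI, setIntegral_congr_fun measurableSet_Icc
      (f := fun r => ∫ v' in Icc vA vB, q r v' * Q v r v' * nS s r * nI s v')
      (g := fun r => ∫ v' in Icc vA vB, q' r v' * Q v r v' * nS s r * nI s v')
      fun r hr => setIntegral_congr_fun measurableSet_Icc fun v' hv' => by
        simp only [h r hr v' hv']]
  exact normA_congr (fun r hr => by simp only [mesoPS, hS _ _ _ r hr])
    (fun v _ => by simp only [mesoPI, hI])

end Operator

end Model

theorem P_contraction_bound_general
    (rA rB vA vB θX θR θV : ℝ)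
    (hrAB : rA ≤ rB) (hvAB : vA ≤ vB)
    (hθX : 0 < θX) (hθR : 0 < θR) (hθV : 0 < θV)
    (KS KI : ℝ → ℝ → ℝ) (Q : ℝ → ℝ → ℝ → ℝ) (q : ℝ → ℝ → ℝ)
    (hKSm : Measurable (Function.uncurry KS)) (hKS0 : ∀ r r', 0 ≤ KS r r')
    (hKS1 : ∀ r' ∈ Icc rA rB, ∫ r in Icc rA rB, KS r r' = 1)
    (hKIm : Measurable (Function.uncurry KI)) (hKI0 : ∀ v v', 0 ≤ KI v v')
    (hKI1 : ∀ v' ∈ Icc vA vB, ∫ v in Icc vA vB, KI v v' = 1)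
    (hQm : Measurable fun p : ℝ × ℝ × ℝ => Q p.1 p.2.1 p.2.2)
    (hQ0 : ∀ v r vs, 0 ≤ Q v r vs)
    (hQ1 : ∀ r ∈ Icc rA rB, ∀ vs ∈ Icc vA vB, ∫ v in Icc vA vB, Q v r vs = 1)
    (hqc : ContinuousOn (Function.uncurry q) (Icc rA rB ×ˢ Icc vA vB))
    (hq01 : ∀ r ∈ Icc rA rB, ∀ v ∈ Icc vA vB, q r v ∈ Icc (0:ℝ) 1)
    (T : ℝ) (hT : 0 < T)
    (nS nI : ℝ → ℝ → ℝ)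
    (hSmeas : Measurable (Function.uncurry nS))
    (hImeas : Measurable (Function.uncurry nI))
    (hSint : ∀ t ∈ Icc (0:ℝ) T, IntegrableOn (nS t) (Icc rA rB))
    (hIint : ∀ t ∈ Icc (0:ℝ) T, IntegrableOn (nI t) (Icc vA vB))
    (hScont : ∀ t₀ ∈ Icc (0:ℝ) T,
      Tendsto (fun t => ∫ r in Icc rA rB, |nS t r - nS t₀ r|)
        (nhdsWithin t₀ (Icc 0 T)) (nhds 0))
    (hIcont : ∀ t₀ ∈ Icc (0:ℝ) T,
      Tendsto (fun t => ∫ v in Icc vA vB, |nI t v - nI t₀ v|)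
        (nhdsWithin t₀ (Icc 0 T)) (nhds 0))
    (mS mI : ℝ → ℝ → ℝ)
    (hSmeas' : Measurable (Function.uncurry mS))
    (hImeas' : Measurable (Function.uncurry mI))
    (hSint' : ∀ t ∈ Icc (0:ℝ) T, IntegrableOn (mS t) (Icc rA rB))
    (hIint' : ∀ t ∈ Icc (0:ℝ) T, IntegrableOn (mI t) (Icc vA vB))
    (hScont' : ∀ t₀ ∈ Icc (0:ℝ) T,
      Tendsto (fun t => ∫ r in Icc rA rB, |mS t r - mS t₀ r|)
        (nhdsWithin t₀ (Icc 0 T)) (nhds 0))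
    (hIcont' : ∀ t₀ ∈ Icc (0:ℝ) T,
      Tendsto (fun t => ∫ v in Icc vA vB, |mI t v - mI t₀ v|)
        (nhdsWithin t₀ (Icc 0 T)) (nhds 0))
    (hinitS : nS 0 = mS 0) (hinitI : nI 0 = mI 0)
    : sSup ((fun t => normA rA rB vA vB
        (fun r => mesoPS rA rB vA vB θX θR KS q nS nI t r
          - mesoPS rA rB vA vB θX θR KS q mS mI t r)
        (fun v => mesoPI rA rB vA vB θX θV KI Q q nS nI t v
          - mesoPI rA rB vA vB θX θV KI Q q mS mI t v)) '' Icc 0 T)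
      ≤ 2 * T * (max θR θV
            + θX * (normB rA rB vA vB T nS nI + normB rA rB vA vB T mS mI))
          * normB rA rB vA vB T (fun t r => nS t r - mS t r)
              (fun t v => nI t v - mI t v) := by
  -- `q` is only controlled on `R × V`, so replace it by its composite with the projection onto it.
  set q' : ℝ → ℝ → ℝ := fun r v => q (projIcc rA rB hrAB r) (projIcc vA vB hvAB v)
  have hqq' : ∀ r ∈ Icc rA rB, ∀ v ∈ Icc vA vB, q r v = q' r v := fun r hr v hv => by
    simp [q', projIcc_of_mem _ hr, projIcc_of_mem _ hv]
  have hq' : Measurable (uncurry q') :=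
    (hqc.comp_continuous (f := fun p : ℝ × ℝ => ((projIcc rA rB hrAB p.1 : ℝ),
      (projIcc vA vB hvAB p.2 : ℝ))) (by fun_prop) fun p =>
        ⟨(projIcc rA rB hrAB p.1).2, (projIcc vA vB hvAB p.2).2⟩).measurable
  have hq'1 : ∀ r v, |q' r v| ≤ 1 := fun r v => by
    obtain ⟨h0, h1⟩ := hq01 _ (projIcc rA rB hrAB r).2 _ (projIcc vA vB hvAB v).2
    exact abs_le.2 ⟨by linarith, h1⟩
  refine csSup_le ((nonempty_Icc.2 hT.le).image _) ?_
  rintro _ ⟨t, ht, rfl⟩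
  beta_reduce
  rw [normA_mesoP_sub_congr hqq']
  exact normA_mesoP_sub_le hθX.le hθR.le hθV.le
    hKSm (fun r' hr' => (lintegral_enorm_eq_one (hKS0 · r') (hKS1 r' hr')).le)
    hKIm (fun v' hv' => (lintegral_enorm_eq_one (hKI0 · v') (hKI1 v' hv')).le)
    hQm (fun r hr vs hvs => (lintegral_enorm_eq_one (hQ0 · r vs) (hQ1 r hr vs hvs)).le) hq' hq'1
    ⟨hSmeas, hSint, hScont⟩ ⟨hImeas, hIint, hIcont⟩ ⟨hSmeas', hSint', hScont'⟩
    ⟨hImeas', hIint', hIcont'⟩ hinitS hinitI ht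

/-- **Lemma A.1, estimate (A.2)**: contraction estimate for the integral operator `P`:
for `n, m` with `n(0) = m(0)`,
`sup_{t ∈ [0,T]} ‖P[n](t) - P[m](t)‖_A ≤ 2T (max(θ_R,θ_V) + θ_X (‖n‖_B + ‖m‖_B)) ‖n - m‖_B`. -/
theorem P_contraction_bound
    (rA rB vA vB θX θR θV : ℝ)
    (hrA : 0 ≤ rA) (hrAB : rA ≤ rB) (hvA : 0 ≤ vA) (hvAB : vA ≤ vB)
    (hθX : 0 < θX) (hθR : 0 < θR) (hθV : 0 < θV)
    (KS KI : ℝ → ℝ → ℝ) (Q : ℝ → ℝ → ℝ → ℝ) (q : ℝ → ℝ → ℝ)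
    (hKSm : Measurable (Function.uncurry KS)) (hKS0 : ∀ r r', 0 ≤ KS r r')
    (hKS1 : ∀ r' ∈ Icc rA rB, ∫ r in Icc rA rB, KS r r' = 1)
    (hKIm : Measurable (Function.uncurry KI)) (hKI0 : ∀ v v', 0 ≤ KI v v')
    (hKI1 : ∀ v' ∈ Icc vA vB, ∫ v in Icc vA vB, KI v v' = 1)
    (hQm : Measurable fun p : ℝ × ℝ × ℝ => Q p.1 p.2.1 p.2.2)
    (hQ0 : ∀ v r vs, 0 ≤ Q v r vs)
    (hQ1 : ∀ r ∈ Icc rA rB, ∀ vs ∈ Icc vA vB, ∫ v in Icc vA vB, Q v r vs = 1)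
    (hqc : ContinuousOn (Function.uncurry q) (Icc rA rB ×ˢ Icc vA vB))
    (hq01 : ∀ r ∈ Icc rA rB, ∀ v ∈ Icc vA vB, q r v ∈ Icc (0:ℝ) 1)
    (T : ℝ) (hT : 0 < T)
    (nS nI : ℝ → ℝ → ℝ)
    (hSmeas : Measurable (Function.uncurry nS))
    (hImeas : Measurable (Function.uncurry nI))
    (hSint : ∀ t ∈ Icc (0:ℝ) T, IntegrableOn (nS t) (Icc rA rB))
    (hIint : ∀ t ∈ Icc (0:ℝ) T, IntegrableOn (nI t) (Icc vA vB))
    (hScont : ∀ t₀ ∈ Icc (0:ℝ) T,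
      Tendsto (fun t => ∫ r in Icc rA rB, |nS t r - nS t₀ r|)
        (nhdsWithin t₀ (Icc 0 T)) (nhds 0))
    (hIcont : ∀ t₀ ∈ Icc (0:ℝ) T,
      Tendsto (fun t => ∫ v in Icc vA vB, |nI t v - nI t₀ v|)
        (nhdsWithin t₀ (Icc 0 T)) (nhds 0))
    (mS mI : ℝ → ℝ → ℝ)
    (hSmeas' : Measurable (Function.uncurry mS))
    (hImeas' : Measurable (Function.uncurry mI))
    (hSint' : ∀ t ∈ Icc (0:ℝ) T, IntegrableOn (mS t) (Icc rA rB))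
    (hIint' : ∀ t ∈ Icc (0:ℝ) T, IntegrableOn (mI t) (Icc vA vB))
    (hScont' : ∀ t₀ ∈ Icc (0:ℝ) T,
      Tendsto (fun t => ∫ r in Icc rA rB, |mS t r - mS t₀ r|)
        (nhdsWithin t₀ (Icc 0 T)) (nhds 0))
    (hIcont' : ∀ t₀ ∈ Icc (0:ℝ) T,
      Tendsto (fun t => ∫ v in Icc vA vB, |mI t v - mI t₀ v|)
        (nhdsWithin t₀ (Icc 0 T)) (nhds 0))
    (hinitS : nS 0 = mS 0) (hinitI : nI 0 = mI 0)
    : sSup ((fun t => normA rA rB vA vB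
        (fun r => mesoPS rA rB vA vB θX θR KS q nS nI t r
          - mesoPS rA rB vA vB θX θR KS q mS mI t r)
        (fun v => mesoPI rA rB vA vB θX θV KI Q q nS nI t v
          - mesoPI rA rB vA vB θX θV KI Q q mS mI t v)) '' Icc 0 T)
      ≤ 2 * T * (max θR θV
            + θX * (normB rA rB vA vB T nS nI + normB rA rB vA vB T mS mI))
          * normB rA rB vA vB T (fun t r => nS t r - mS t r)
              (fun t v => nI t v - mI t v) :=
  P_contraction_bound_general rA rB vA vB θX θR θV hrAB hvAB hθX hθR hθV KS KI Q q hKSm hKS0 hKS1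
    hKIm hKI0 hKI1 hQm hQ0 hQ1 hqc hq01 T hT nS nI hSmeas hImeas hSint hIint hScont hIcont mS mI
    hSmeas' hImeas' hSint' hIint' hScont' hIcont' hinitS hinitI
end

section
/- A priori estimates for the macroscopic model (Theorem 3.2 and Appendix B): Any solution (N_S, N_I, M_S, M_I) of the macroscopic ODE system coupled with the moment constraints on ψ_S, ψ_I, and subject to the initial conditions N_S(0) = N_{S,0} ∈ (0,1), N_I(0) = 1 - N_{S,0}, M_S(0) ∈ [0, r_max], M_I(0) ∈ [0, v_max], satisfies, for all t ≥ 0: 0 ≤ N_S(t) ≤ 1, 0 ≤ N_I(t) ≤ 1, 0 ≤ M_S(t) ≤ r_max, 0 ≤ M_I(t) ≤ v_max, and N_S(t) + N_I(t) = 1. -/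
/-!
The populations `N_S, N_I` have opposite derivatives, so their sum keeps its initial value `1`.
Each of them solves a linear equation `N' = N g` whose coefficient is a continuous population
times the interaction integral, which lies in `[0, 1]` because `q ∈ [0, 1]` and `ψ_S, ψ_I` are
probability densities; if `N` became negative it would vanish at some earlier time `τ`, and
Grönwall's inequality on `[τ, t]` would force `N t = 0`. The mean traits `M_S, M_I` are first
moments of probability densities on `[0, r_max]` and `[0, v_max]`, hence lie in these intervals.
-/

open MeasureTheory Set

section Integrals

variable {X : Type*} [MeasurableSpace X] {μ : Measure X}

theorem setIntegral_mem_Icc_of_nonneg_of_le {s : Set X} {f g : X → ℝ} (hs : MeasurableSet s)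
    (hf : ∀ x ∈ s, 0 ≤ f x) (hfg : ∀ x ∈ s, f x ≤ g x) (hg : IntegrableOn g s μ) :
    ∫ x in s, f x ∂μ ∈ Icc 0 (∫ x in s, g x ∂μ) :=
  ⟨setIntegral_nonneg hs hf,
    integral_mono_of_nonneg (ae_restrict_of_forall_mem hs hf) hg (ae_restrict_of_forall_mem hs hfg)⟩

theorem setIntegral_Icc_mul_mem_Icc {μ : Measure ℝ} {ψ : ℝ → ℝ} {a : ℝ}
    (hψ0 : ∀ x ∈ Icc 0 a, 0 ≤ ψ x) (hψ : IntegrableOn ψ (Icc 0 a) μ)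
    (hψ1 : ∫ x in Icc 0 a, ψ x ∂μ = 1) :
    ∫ x in Icc 0 a, x * ψ x ∂μ ∈ Icc 0 a := by
  have h := setIntegral_mem_Icc_of_nonneg_of_le measurableSet_Icc
    (fun x hx => mul_nonneg hx.1 (hψ0 x hx))
    (fun x hx => mul_le_mul_of_nonneg_right hx.2 (hψ0 x hx)) (hψ.const_mul a)
  rwa [integral_const_mul, hψ1, mul_one] at h

theorem setIntegral_setIntegral_mul_mul_mem_Icc {Y : Type*} [MeasurableSpace Y] {ν : Measure Y}
    {s : Set X} {u : Set Y} {q : X → Y → ℝ} {φ : X → ℝ} {ψ : Y → ℝ}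
    (hs : MeasurableSet s) (hu : MeasurableSet u) (hq : ∀ x ∈ s, ∀ y ∈ u, q x y ∈ Icc 0 1)
    (hφ0 : ∀ x, 0 ≤ φ x) (hψ0 : ∀ y, 0 ≤ ψ y)
    (hφ : IntegrableOn φ s μ) (hψ : IntegrableOn ψ u ν)
    (hφ1 : ∫ x in s, φ x ∂μ = 1) (hψ1 : ∫ y in u, ψ y ∂ν = 1) :
    ∫ x in s, ∫ y in u, q x y * φ x * ψ y ∂ν ∂μ ∈ Icc 0 1 := by
  have inner : ∀ x ∈ s, ∫ y in u, q x y * φ x * ψ y ∂ν ∈ Icc 0 (φ x) := by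
    intro x hx
    have h := setIntegral_mem_Icc_of_nonneg_of_le hu
      (fun y hy => mul_nonneg (mul_nonneg (hq x hx y hy).1 (hφ0 x)) (hψ0 y))
      (fun y hy => by
        rw [mul_assoc]
        exact mul_le_of_le_one_left (mul_nonneg (hφ0 x) (hψ0 y)) (hq x hx y hy).2)
      (hψ.const_mul (φ x))
    rwa [integral_const_mul, hψ1, mul_one] at h
  have h := setIntegral_mem_Icc_of_nonneg_of_le hs (fun x hx => (inner x hx).1)
    (fun x hx => (inner x hx).2) hφ
  rwa [hφ1] at h

end Integrals

section Derivatives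

variable {a : ℝ}

theorem add_eq_of_hasDerivWithinAt_neg {f g h : ℝ → ℝ}
    (hf : ∀ t ∈ Ici a, HasDerivWithinAt f (-h t) (Ici a) t)
    (hg : ∀ t ∈ Ici a, HasDerivWithinAt g (h t) (Ici a) t) :
    ∀ t ∈ Ici a, f t + g t = f a + g a := by
  intro t ht
  have hsum : ∀ x ∈ Ici a, HasDerivWithinAt (f + g) 0 (Ici a) x := fun x hx => by
    simpa using (hf x hx).add (hg x hx)
  exact constant_of_has_deriv_right_zero
    (fun x hx => (hsum x hx.1).continuousWithinAt.mono Icc_subset_Ici_self)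
    (fun x hx => (hsum x hx.1).mono (Ici_subset_Ici.2 hx.1)) t ⟨ht, le_rfl⟩

theorem nonneg_of_hasDerivWithinAt_mul {f g : ℝ → ℝ}
    (hf : ∀ t ∈ Ici a, HasDerivWithinAt f (f t * g t) (Ici a) t)
    (hg : ∀ b, ∃ C, ∀ t ∈ Icc a b, |g t| ≤ C) (ha : 0 ≤ f a) :
    ∀ t ∈ Ici a, 0 ≤ f t := by
  intro t ht
  by_contra! hneg
  have hfc : ContinuousOn f (Icc a t) := fun x hx =>
    (hf x hx.1).continuousWithinAt.mono Icc_subset_Ici_self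
  obtain ⟨τ, hτ, hfτ⟩ := intermediate_value_Icc' ht hfc ⟨hneg.le, ha⟩
  obtain ⟨C, hC⟩ := hg t
  have hft := eq_zero_of_abs_deriv_le_mul_abs_self_of_eq_zero_right (K := C)
    (hfc.mono (Icc_subset_Icc_left hτ.1))
    (fun x hx => (hf x (hτ.1.trans hx.1)).mono (Ici_subset_Ici.2 (hτ.1.trans hx.1))) hfτ
    (fun x hx => by
      rw [Real.norm_eq_abs, Real.norm_eq_abs, abs_mul, mul_comm]
      exact mul_le_mul_of_nonneg_right (hC x ⟨hτ.1.trans hx.1, hx.2.le⟩) (abs_nonneg _))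
    t ⟨hτ.2, le_rfl⟩
  exact hneg.ne hft

theorem exists_abs_mul_le_of_continuousOn {F K : ℝ → ℝ} {b M : ℝ}
    (hF : ContinuousOn F (Icc a b)) (hK : ∀ t ∈ Icc a b, |K t| ≤ M) :
    ∃ C, ∀ t ∈ Icc a b, |F t * K t| ≤ C := by
  obtain ⟨C, hC⟩ := isCompact_Icc.exists_bound_of_continuousOn hF
  refine ⟨C * M, fun t ht => ?_⟩
  rw [abs_mul]
  exact mul_le_mul (hC t ht) (hK t ht) (abs_nonneg _) ((abs_nonneg _).trans (hC t ht))

end Derivatives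

theorem macroscopic_apriori_estimates_general
    (rmax vmax : ℝ)
    (q : ℝ → ℝ → ℝ)
    (hq01 : ∀ r ∈ Icc (0:ℝ) rmax, ∀ v ∈ Icc (0:ℝ) vmax, q r v ∈ Icc (0:ℝ) 1)
    (ψS ψI : ℝ → ℝ → ℝ)
    (hψS0 : ∀ t ∈ Ici (0:ℝ), ∀ r, 0 ≤ ψS t r)
    (hψSint : ∀ t ∈ Ici (0:ℝ), IntegrableOn (ψS t) (Icc 0 rmax))
    (hψI0 : ∀ t ∈ Ici (0:ℝ), ∀ v, 0 ≤ ψI t v)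
    (hψIint : ∀ t ∈ Ici (0:ℝ), IntegrableOn (ψI t) (Icc 0 vmax))
    (NS NI MS MI : ℝ → ℝ) (NS0 : ℝ)
    (hNS0 : NS0 ∈ Ioo (0:ℝ) 1) (hNSinit : NS 0 = NS0) (hNIinit : NI 0 = 1 - NS0)
    (hmomS1 : ∀ t ∈ Ici (0:ℝ), ∫ r in Icc (0:ℝ) rmax, ψS t r = 1)
    (hmomS2 : ∀ t ∈ Ici (0:ℝ), ∫ r in Icc (0:ℝ) rmax, r * ψS t r = MS t)
    (hmomI1 : ∀ t ∈ Ici (0:ℝ), ∫ v in Icc (0:ℝ) vmax, ψI t v = 1)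
    (hmomI2 : ∀ t ∈ Ici (0:ℝ), ∫ v in Icc (0:ℝ) vmax, v * ψI t v = MI t)
    (hdNS : ∀ t ∈ Ici (0:ℝ), HasDerivWithinAt NS
      (-(NS t * NI t *
        ∫ r in Icc (0:ℝ) rmax, ∫ v in Icc (0:ℝ) vmax, q r v * ψS t r * ψI t v)) (Ici 0) t)
    (hdNI : ∀ t ∈ Ici (0:ℝ), HasDerivWithinAt NI
      (NS t * NI t *
        ∫ r in Icc (0:ℝ) rmax, ∫ v in Icc (0:ℝ) vmax, q r v * ψS t r * ψI t v) (Ici 0) t) :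
    ∀ t ∈ Ici (0:ℝ), NS t ∈ Icc (0:ℝ) 1 ∧ NI t ∈ Icc (0:ℝ) 1 ∧
      MS t ∈ Icc (0:ℝ) rmax ∧ MI t ∈ Icc (0:ℝ) vmax ∧ NS t + NI t = 1 := by
  set K : ℝ → ℝ := fun t =>
    ∫ r in Icc (0:ℝ) rmax, ∫ v in Icc (0:ℝ) vmax, q r v * ψS t r * ψI t v
  have hK : ∀ t ∈ Ici (0:ℝ), |K t| ≤ 1 := fun t ht => abs_le.2 <| by
    have h := setIntegral_setIntegral_mul_mul_mem_Icc measurableSet_Icc measurableSet_Icc hq01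
      (hψS0 t ht) (hψI0 t ht) (hψSint t ht) (hψIint t ht) (hmomS1 t ht) (hmomI1 t ht)
    exact ⟨by linarith [h.1], h.2⟩
  have hbound : ∀ F : ℝ → ℝ, ContinuousOn F (Ici 0) →
      ∀ b, ∃ C, ∀ t ∈ Icc 0 b, |F t * K t| ≤ C := fun F hF b =>
    exists_abs_mul_le_of_continuousOn (hF.mono Icc_subset_Ici_self)
      (fun t ht => hK t ht.1)
  have hNSc : ContinuousOn NS (Ici 0) := fun t ht => (hdNS t ht).continuousWithinAt
  have hNIc : ContinuousOn NI (Ici 0) := fun t ht => (hdNI t ht).continuousWithinAt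
  have hNS : ∀ t ∈ Ici (0:ℝ), 0 ≤ NS t :=
    nonneg_of_hasDerivWithinAt_mul (g := fun t => -NI t * K t)
      (fun t ht => (hdNS t ht).congr_deriv (by ring)) (hbound _ hNIc.neg)
      (hNSinit ▸ hNS0.1.le)
  have hNI : ∀ t ∈ Ici (0:ℝ), 0 ≤ NI t :=
    nonneg_of_hasDerivWithinAt_mul (g := fun t => NS t * K t)
      (fun t ht => (hdNI t ht).congr_deriv (by ring)) (hbound _ hNSc)
      (by linarith [hNS0.2])
  intro t ht
  have hsum : NS t + NI t = 1 := by
    rw [add_eq_of_hasDerivWithinAt_neg hdNS hdNI t ht, hNSinit, hNIinit]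
    ring
  refine ⟨⟨hNS t ht, by linarith [hNI t ht]⟩, ⟨hNI t ht, by linarith [hNS t ht]⟩, ?_, ?_, hsum⟩
  · exact hmomS2 t ht ▸ setIntegral_Icc_mul_mem_Icc (fun r _ => hψS0 t ht r) (hψSint t ht)
      (hmomS1 t ht)
  · exact hmomI2 t ht ▸ setIntegral_Icc_mul_mem_Icc (fun v _ => hψI0 t ht v) (hψIint t ht)
      (hmomI1 t ht)

/-- **Theorem 3.2 and Appendix B**: a priori estimates for the macroscopic model.
Any solution `(N_S, N_I, M_S, M_I)` of the macroscopic ODE system coupled with the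
moment constraints on `ψ_S, ψ_I` satisfies `0 ≤ N_S ≤ 1`, `0 ≤ N_I ≤ 1`,
`0 ≤ M_S ≤ r_max`, `0 ≤ M_I ≤ v_max` and `N_S + N_I = 1` for all `t ≥ 0`. -/
theorem macroscopic_apriori_estimates
    (rmax vmax : ℝ) (hrmax : 0 < rmax) (hvmax : 0 < vmax)
    (q : ℝ → ℝ → ℝ) (Qbar : ℝ → ℝ → ℝ)
    (hqc : ContinuousOn (Function.uncurry q) (Icc 0 rmax ×ˢ Icc 0 vmax))
    (hq01 : ∀ r ∈ Icc (0:ℝ) rmax, ∀ v ∈ Icc (0:ℝ) vmax, q r v ∈ Icc (0:ℝ) 1)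
    (hQbm : Measurable (Function.uncurry Qbar))
    (hQb : ∀ r ∈ Icc (0:ℝ) rmax, ∀ v ∈ Icc (0:ℝ) vmax, Qbar r v ∈ Icc (0:ℝ) vmax)
    (ψS ψI : ℝ → ℝ → ℝ)
    (hψSm : ∀ t ∈ Ici (0:ℝ), Measurable (ψS t))
    (hψS0 : ∀ t ∈ Ici (0:ℝ), ∀ r, 0 ≤ ψS t r)
    (hψSint : ∀ t ∈ Ici (0:ℝ), IntegrableOn (ψS t) (Icc 0 rmax))
    (hψIm : ∀ t ∈ Ici (0:ℝ), Measurable (ψI t))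
    (hψI0 : ∀ t ∈ Ici (0:ℝ), ∀ v, 0 ≤ ψI t v)
    (hψIint : ∀ t ∈ Ici (0:ℝ), IntegrableOn (ψI t) (Icc 0 vmax))
    (NS NI MS MI : ℝ → ℝ) (NS0 : ℝ)
    (hNS0 : NS0 ∈ Ioo (0:ℝ) 1) (hNSinit : NS 0 = NS0) (hNIinit : NI 0 = 1 - NS0)
    (hMSinit : MS 0 ∈ Icc (0:ℝ) rmax) (hMIinit : MI 0 ∈ Icc (0:ℝ) vmax)
    (hmomS1 : ∀ t ∈ Ici (0:ℝ), ∫ r in Icc (0:ℝ) rmax, ψS t r = 1)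
    (hmomS2 : ∀ t ∈ Ici (0:ℝ), ∫ r in Icc (0:ℝ) rmax, r * ψS t r = MS t)
    (hmomI1 : ∀ t ∈ Ici (0:ℝ), ∫ v in Icc (0:ℝ) vmax, ψI t v = 1)
    (hmomI2 : ∀ t ∈ Ici (0:ℝ), ∫ v in Icc (0:ℝ) vmax, v * ψI t v = MI t)
    (hdNS : ∀ t ∈ Ici (0:ℝ), HasDerivWithinAt NS
      (-(NS t * NI t *
        ∫ r in Icc (0:ℝ) rmax, ∫ v in Icc (0:ℝ) vmax, q r v * ψS t r * ψI t v)) (Ici 0) t)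
    (hdNI : ∀ t ∈ Ici (0:ℝ), HasDerivWithinAt NI
      (NS t * NI t *
        ∫ r in Icc (0:ℝ) rmax, ∫ v in Icc (0:ℝ) vmax, q r v * ψS t r * ψI t v) (Ici 0) t)
    (hdMS : ∀ t ∈ Ici (0:ℝ), HasDerivWithinAt MS
      (NI t * ∫ v in Icc (0:ℝ) vmax,
        (∫ r in Icc (0:ℝ) rmax, (MS t - r) * q r v * ψS t r) * ψI t v) (Ici 0) t)
    (hdMI : ∀ t ∈ Ici (0:ℝ), HasDerivWithinAt MI
      (NS t * ∫ r in Icc (0:ℝ) rmax, ∫ v in Icc (0:ℝ) vmax,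
        (Qbar r v - MI t) * q r v * ψS t r * ψI t v) (Ici 0) t) :
    ∀ t ∈ Ici (0:ℝ), NS t ∈ Icc (0:ℝ) 1 ∧ NI t ∈ Icc (0:ℝ) 1 ∧
      MS t ∈ Icc (0:ℝ) rmax ∧ MI t ∈ Icc (0:ℝ) vmax ∧ NS t + NI t = 1 :=
  macroscopic_apriori_estimates_general rmax vmax q hq01 ψS ψI hψS0 hψSint hψI0 hψIint NS NI MS MI
    NS0 hNS0 hNSinit hNIinit hmomS1 hmomS2 hmomI1 hmomI2 hdNS hdNI
end

section
/- Characterisation of invariant probability measures of mean-preserving kernels with positive interior variance (Lemma 3.3): Let K be a Markov kernel from [0,1] to [0,1] such that for every r' ∈ [0,1] the probability measure K(r') has mean r' (i.e. ∫_{[0,1]} r dK(r')(r) = r') and for every r' in the open interval (0,1) the variance of K(r') is strictly positive (i.e. ∫_{[0,1]} r² dK(r')(r) - (r')² > 0). If μ is a probability measure on [0,1] that is invariant under K, i.e. μ(E) = ∫_{[0,1]} K(r')(E) dμ(r') for every Borel set E ⊆ [0,1], and μ has mean M := ∫_{[0,1]} r dμ(r), then μ = (1 - M)·δ_0 + M·δ_1,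 where δ_0 and δ_1 are the Dirac measures at 0 and 1. -/
/-!
If `κ ∘ₘ μ = μ` and `κ` preserves the mean of a bounded observable `X`, then integrating the
conditional variances gives `∫ Var[X; κ a] dμ(a) = ∫ X² d(κ ∘ₘ μ) - ∫ X² dμ = 0`, so the
variance of `κ a` vanishes for `μ`-a.e. `a`. For the kernel of the theorem this forces `μ` to live
on `{0, 1}`, and a probability measure on two points is determined by its mean.
-/

open MeasureTheory ProbabilityTheory

namespace MeasureTheory.Measure

variable {α : Type*} [MeasurableSpace α]

lemma integral_comp {β E : Type*} [MeasurableSpace β] [NormedAddCommGroup E]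
    [NormedSpace ℝ E] {μ : Measure α} {κ : Kernel α β} {f : β → E}
    (hf : Integrable f (κ ∘ₘ μ)) :
    ∫ y, f y ∂(κ ∘ₘ μ) = ∫ x, ∫ y, f y ∂κ x ∂μ := by
  rw [comp_eq_comp_const_apply] at hf ⊢
  rw [Kernel.integral_comp hf]
  simp

lemma eq_smul_dirac_add_smul_dirac [MeasurableSingletonClass α] {μ : Measure α} {a b : α}
    (hab : a ≠ b) (h : ∀ᵐ x ∂μ, x = a ∨ x = b) :
    μ = μ {a} • dirac a + μ {b} • dirac b :=
  calc μ = μ.restrict ({a} ∪ {b}) := (restrict_eq_self_of_ae_mem h).symm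
    _ = μ {a} • dirac a + μ {b} • dirac b := by
      rw [restrict_union (Set.disjoint_singleton.2 hab) (measurableSet_singleton b),
        restrict_singleton, restrict_singleton]

end MeasureTheory.Measure

namespace ProbabilityTheory

variable {α : Type*} [MeasurableSpace α] {X : α → ℝ} {C : ℝ}

lemma variance_eq_integral_sq_sub_sq_of_bound {ν : Measure α} [IsProbabilityMeasure ν]
    (hX : Measurable X) (hXC : ∀ a, |X a| ≤ C) :
    Var[X; ν] = ∫ y, X y ^ 2 ∂ν - (∫ y, X y ∂ν) ^ 2 := by
  rw [variance_eq_sub (MemLp.of_bound hX.aestronglyMeasurable C (ae_of_all _ hXC))]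
  rfl

lemma ae_variance_eq_zero_of_comp_eq_self {κ : Kernel α α} [IsMarkovKernel κ]
    {μ : Measure α} [IsProbabilityMeasure μ] (hX : Measurable X) (hXC : ∀ a, |X a| ≤ C)
    (hmean : ∀ a, ∫ y, X y ∂κ a = X a) (hμ : κ ∘ₘ μ = μ) :
    ∀ᵐ a ∂μ, Var[X; κ a] = 0 := by
  have hsq_int : ∀ (ν : Measure α) [IsFiniteMeasure ν], Integrable (fun y ↦ X y ^ 2) ν :=
    fun ν _ ↦ Integrable.of_bound (hX.pow_const 2).aestronglyMeasurable (C ^ 2)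
      (ae_of_all _ fun a ↦ by simpa [sq_abs] using pow_le_pow_left₀ (abs_nonneg _) (hXC a) 2)
  have hsecond_int : Integrable (fun a ↦ ∫ y, X y ^ 2 ∂κ a) μ := by
    simpa only [norm_pow, Real.norm_eq_abs, sq_abs] using
      Measure.integrable_integral_norm_of_integrable_comp (hsq_int (κ ∘ₘ μ))
  have hvar : (fun a ↦ Var[X; κ a]) = fun a ↦ ∫ y, X y ^ 2 ∂κ a - X a ^ 2 := by
    ext a
    rw [variance_eq_integral_sq_sub_sq_of_bound hX hXC, hmean]
  have hint : ∫ a, Var[X; κ a] ∂μ = 0 := by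
    rw [hvar, integral_sub hsecond_int (hsq_int μ),
      ← Measure.integral_comp (hsq_int _), hμ, sub_self]
  refine (integral_eq_zero_iff_of_nonneg (fun a ↦ variance_nonneg _ _) ?_).1 hint
  rw [hvar]
  exact hsecond_int.sub (hsq_int μ)

end ProbabilityTheory

lemma eq_smul_dirac_zero_add_smul_dirac_one (μ : Measure (Set.Icc (0:ℝ) 1))
    [IsProbabilityMeasure μ] (h : ∀ᵐ x ∂μ, x = 0 ∨ x = 1) :
    μ = ENNReal.ofReal (1 - ∫ x, (x : ℝ) ∂μ) • Measure.dirac 0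
      + ENNReal.ofReal (∫ x, (x : ℝ) ∂μ) • Measure.dirac 1 := by
  have hdecomp := Measure.eq_smul_dirac_add_smul_dirac zero_ne_one h
  have hmass : μ.real {0} + μ.real {1} = 1 := by
    simpa [ENNReal.toReal_add, measureReal_def] using
      congrArg (fun ν ↦ (ν Set.univ).toReal) hdecomp.symm
  have hmean : ∫ x, (x : ℝ) ∂μ = μ.real {1} := by
    conv_lhs => rw [hdecomp]
    rw [integral_add_measure, integral_smul_measure, integral_smul_measure, integral_dirac,
      integral_dirac]
    · simp [measureReal_def]
    all_goals exact (integrable_dirac enorm_lt_top).smul_measure (measure_ne_top _ _)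
  rw [hmean, ← eq_sub_of_add_eq hmass, ofReal_measureReal, ofReal_measureReal]
  exact hdecomp

/-- **Lemma 3.3**: characterisation of invariant probability measures of a Markov kernel
on `[0,1]` which is mean-preserving and has strictly positive variance at interior points:
any invariant probability measure with mean `M` equals `(1-M)·δ₀ + M·δ₁`. -/
theorem invariant_measure_of_mean_preserving_kernel
    (K : Kernel (Set.Icc (0:ℝ) 1) (Set.Icc (0:ℝ) 1)) [IsMarkovKernel K]
    (hmean : ∀ r' : Set.Icc (0:ℝ) 1, ∫ x, (x : ℝ) ∂(K r') = (r' : ℝ))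
    (hvar : ∀ r' : Set.Icc (0:ℝ) 1, (r' : ℝ) ∈ Set.Ioo (0:ℝ) 1 →
      0 < (∫ x, ((x : ℝ)) ^ 2 ∂(K r')) - ((r' : ℝ)) ^ 2)
    (μ : Measure (Set.Icc (0:ℝ) 1)) [IsProbabilityMeasure μ]
    (hinv : ∀ E : Set (Set.Icc (0:ℝ) 1), MeasurableSet E → μ E = ∫⁻ r', K r' E ∂μ)
    (M : ℝ) (hM : M = ∫ x, (x : ℝ) ∂μ) :
    μ = ENNReal.ofReal (1 - M) • Measure.dirac (⟨0, by norm_num⟩ : Set.Icc (0:ℝ) 1)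
      + ENNReal.ofReal M • Measure.dirac (⟨1, by norm_num⟩ : Set.Icc (0:ℝ) 1) := by
  have hμ : K ∘ₘ μ = μ := Measure.ext fun E hE ↦ by
    rw [Measure.bind_apply hE K.aemeasurable, hinv E hE]
  have hbound : ∀ x : Set.Icc (0:ℝ) 1, |(x : ℝ)| ≤ 1 := fun x ↦ by
    rw [abs_of_nonneg x.2.1]; exact x.2.2
  have hzero := ae_variance_eq_zero_of_comp_eq_self measurable_subtype_coe hbound hmean hμ
  have hsupp : ∀ᵐ r' ∂μ, r' = 0 ∨ r' = 1 := by
    filter_upwards [hzero] with r' hr'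
    by_contra! hne
    have hpos := hvar r' ⟨lt_of_le_of_ne r'.2.1 fun h ↦ hne.1 (Subtype.ext h.symm),
      lt_of_le_of_ne r'.2.2 fun h ↦ hne.2 (Subtype.ext h)⟩
    rw [variance_eq_integral_sq_sub_sq_of_bound measurable_subtype_coe hbound, hmean] at hr'
    linarith
  rw [hM]
  exact eq_smul_dirac_zero_add_smul_dirac_one μ hsupp
end

section
/- Long-time behaviour when 0 < q(1,1) < q(0,1) ≤ 1 (Proposition 3.4): Assume 0 < b < a ≤ 1. Then the solution of the macroscopic Dirac ODE system satisfies: N_S(t) → 0, N_I(t) → 1, M_S(t) → 1 as t → ∞, and M_I(t) → (1 - N_{S,0}) M_{I,0} + N_{S,0} (A (1 - M_{S,0}) + B M_{S,0}) as t → ∞. -/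
/-!
Both `NI` and `MS` are nondecreasing (the latter because `a > b`), and `NS` stays positive.
On the level `m = min (min A B / 2) MI₀` the gain term of the `MI` equation beats its loss
term, so `MI ≥ m` for all times. The per-capita decay rates of `NS` and of `1 - MS` are then
bounded below by positive constants, and both decay exponentially. Finally
`NI MI + NS (A (1 - MS) + B MS)` is a conserved quantity, so `NI MI`, and with it `MI`,
converges to its initial value.
-/

open Set Filter Topology

section Comparison

variable {f f' : ℝ → ℝ}

theorem monotoneOn_Ici_zero_of_hasDerivWithinAt_nonneg
    (hf : ∀ t ∈ Ici (0:ℝ), HasDerivWithinAt f (f' t) (Ici 0) t)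
    (h : ∀ t ∈ Ici (0:ℝ), 0 ≤ f' t) : MonotoneOn f (Ici 0) :=
  monotoneOn_of_hasDerivWithinAt_nonneg (convex_Ici 0)
    (fun t ht => (hf t ht).continuousWithinAt)
    (fun t ht => (hf t (interior_subset ht)).mono interior_subset)
    (fun t ht => h t (interior_subset ht))

theorem mul_exp_neg_le_of_hasDerivWithinAt {k : ℝ}
    (hf : ∀ t ∈ Ici (0:ℝ), HasDerivWithinAt f (f' t) (Ici 0) t)
    (h : ∀ t ∈ Ici (0:ℝ), -k * f t ≤ f' t) {t : ℝ} (ht : t ∈ Ici (0:ℝ)) :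
    f 0 * Real.exp (-(k * t)) ≤ f t := by
  have hg : ∀ s ∈ Ici (0:ℝ), HasDerivWithinAt (fun s => f s * Real.exp (k * s))
      ((f' s + k * f s) * Real.exp (k * s)) (Ici 0) s := fun s hs =>
    ((hf s hs).mul (((hasDerivAt_id s).const_mul k).exp.hasDerivWithinAt)).congr_deriv
      (by simp only [id, mul_one]; ring)
  have hmono := monotoneOn_Ici_zero_of_hasDerivWithinAt_nonneg hg fun s hs =>
    mul_nonneg (by linarith [h s hs]) (Real.exp_pos _).le
  have h0t : f 0 * Real.exp (k * 0) ≤ f t * Real.exp (k * t) := hmono self_mem_Ici ht ht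
  calc f 0 * Real.exp (-(k * t))
      = f 0 * Real.exp (k * 0) * Real.exp (-(k * t)) := by simp
    _ ≤ f t * Real.exp (k * t) * Real.exp (-(k * t)) := by gcongr
    _ = f t := by rw [mul_assoc, ← Real.exp_add, add_neg_cancel, Real.exp_zero, mul_one]

theorem le_mul_exp_neg_of_hasDerivWithinAt {k : ℝ}
    (hf : ∀ t ∈ Ici (0:ℝ), HasDerivWithinAt f (f' t) (Ici 0) t)
    (h : ∀ t ∈ Ici (0:ℝ), f' t ≤ -k * f t) {t : ℝ} (ht : t ∈ Ici (0:ℝ)) :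
    f t ≤ f 0 * Real.exp (-(k * t)) := by
  have := mul_exp_neg_le_of_hasDerivWithinAt (f := -f) (k := k)
    (fun s hs => (hf s hs).neg) (fun s hs => by simp only [Pi.neg_apply]; linarith [h s hs]) ht
  simp only [Pi.neg_apply, neg_mul] at this
  linarith

theorem tendsto_zero_of_hasDerivWithinAt_le_neg_mul {k : ℝ} (hk : 0 < k)
    (hf : ∀ t ∈ Ici (0:ℝ), HasDerivWithinAt f (f' t) (Ici 0) t)
    (h : ∀ t ∈ Ici (0:ℝ), f' t ≤ -k * f t) (hf0 : ∀ t ∈ Ici (0:ℝ), 0 ≤ f t) :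
    Tendsto f atTop (𝓝 0) := by
  have hexp : Tendsto (fun t => f 0 * Real.exp (-(k * t))) atTop (𝓝 0) := by
    simpa using (Real.tendsto_exp_neg_atTop_nhds_zero.comp
      (tendsto_id.const_mul_atTop hk)).const_mul (f 0)
  refine tendsto_of_tendsto_of_tendsto_of_le_of_le' tendsto_const_nhds hexp ?_ ?_
  · filter_upwards [eventually_ge_atTop 0] with t ht using hf0 t ht
  · filter_upwards [eventually_ge_atTop 0] with t ht using
      le_mul_exp_neg_of_hasDerivWithinAt hf h ht

theorem le_of_hasDerivWithinAt_pos_of_eq {m : ℝ}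
    (hf : ∀ t ∈ Ici (0:ℝ), HasDerivWithinAt f (f' t) (Ici 0) t)
    (h0 : m ≤ f 0) (h : ∀ t ∈ Ici (0:ℝ), f t = m → 0 < f' t) {t : ℝ} (ht : t ∈ Ici (0:ℝ)) :
    m ≤ f t :=
  image_le_of_deriv_right_lt_deriv_boundary' (f := fun _ => m) (f' := fun _ => 0)
    continuousOn_const (fun _ _ => hasDerivWithinAt_const _ _ m) h0
    (fun s hs => (hf s hs.1).continuousWithinAt.mono Icc_subset_Ici_self)
    (fun s hs => (hf s hs.1).mono (Ici_subset_Ici.2 hs.1))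
    (fun s hs hs' => h s hs.1 hs'.symm) ⟨ht, le_rfl⟩

end Comparison

theorem mul_one_sub_add_mul_mem_Icc {a b x : ℝ} (hba : b ≤ a) (hx : x ∈ Icc (0:ℝ) 1) :
    a * (1 - x) + b * x ∈ Icc b a := by
  obtain ⟨hx0, hx1⟩ := hx
  constructor <;> nlinarith

structure IsMacroDiracSolution (a b A B : ℝ) (NS NI MS MI : ℝ → ℝ) : Prop where
  hasDerivWithinAt_NS : ∀ t ∈ Ici (0:ℝ), HasDerivWithinAt NS
    (-(NS t * NI t * MI t * (a * (1 - MS t) + b * MS t))) (Ici 0) t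
  hasDerivWithinAt_NI : ∀ t ∈ Ici (0:ℝ), HasDerivWithinAt NI
    (NS t * NI t * MI t * (a * (1 - MS t) + b * MS t)) (Ici 0) t
  hasDerivWithinAt_MS : ∀ t ∈ Ici (0:ℝ), HasDerivWithinAt MS
    (NI t * MI t * (a - b) * (1 - MS t) * MS t) (Ici 0) t
  hasDerivWithinAt_MI : ∀ t ∈ Ici (0:ℝ), HasDerivWithinAt MI
    (NS t * MI t * (A * a * (1 - MS t) + B * b * MS t
      - MI t * (a * (1 - MS t) + b * MS t))) (Ici 0) t
  bounds : ∀ t ∈ Ici (0:ℝ), NS t ∈ Icc (0:ℝ) 1 ∧ NI t ∈ Icc (0:ℝ) 1 ∧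
    MS t ∈ Icc (0:ℝ) 1 ∧ MI t ∈ Icc (0:ℝ) 1 ∧ NS t + NI t = 1

namespace IsMacroDiracSolution

variable {a b A B : ℝ} {NS NI MS MI : ℝ → ℝ}

theorem monotoneOn_NI (h : IsMacroDiracSolution a b A B NS NI MS MI) (hb : 0 ≤ b)
    (hba : b ≤ a) : MonotoneOn NI (Ici 0) :=
  monotoneOn_Ici_zero_of_hasDerivWithinAt_nonneg h.hasDerivWithinAt_NI fun t ht => by
    obtain ⟨hNS, hNI, hMS, hMI, -⟩ := h.bounds t ht
    exact mul_nonneg (mul_nonneg (mul_nonneg hNS.1 hNI.1) hMI.1)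
      (hb.trans (mul_one_sub_add_mul_mem_Icc hba hMS).1)

theorem monotoneOn_MS (h : IsMacroDiracSolution a b A B NS NI MS MI) (hba : b ≤ a) :
    MonotoneOn MS (Ici 0) :=
  monotoneOn_Ici_zero_of_hasDerivWithinAt_nonneg h.hasDerivWithinAt_MS fun t ht => by
    obtain ⟨-, hNI, hMS, hMI, -⟩ := h.bounds t ht
    exact mul_nonneg (mul_nonneg (mul_nonneg (mul_nonneg hNI.1 hMI.1) (sub_nonneg.2 hba))
      (sub_nonneg.2 hMS.2)) hMS.1

theorem NS_pos (h : IsMacroDiracSolution a b A B NS NI MS MI) (hb : 0 ≤ b) (hba : b ≤ a)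
    (h0 : 0 < NS 0) {t : ℝ} (ht : t ∈ Ici (0:ℝ)) : 0 < NS t := by
  have hdecay : ∀ s ∈ Ici (0:ℝ),
      -a * NS s ≤ -(NS s * NI s * MI s * (a * (1 - MS s) + b * MS s)) := fun s hs => by
    obtain ⟨hNS, hNI, hMS, hMI, -⟩ := h.bounds s hs
    obtain ⟨hrate_b, hrate_a⟩ := mul_one_sub_add_mul_mem_Icc hba hMS
    have hNIMI : NI s * MI s ≤ 1 := mul_le_one₀ hNI.2 hMI.1 hMI.2
    have hloss : NI s * MI s * (a * (1 - MS s) + b * MS s) ≤ a := by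
      nlinarith [mul_nonneg hNI.1 hMI.1]
    nlinarith [hNS.1]
  exact (by positivity : 0 < NS 0 * Real.exp (-(a * t))).trans_le
    (mul_exp_neg_le_of_hasDerivWithinAt h.hasDerivWithinAt_NS hdecay ht)

theorem exists_pos_le_MI (h : IsMacroDiracSolution a b A B NS NI MS MI) (hb : 0 < b)
    (hba : b ≤ a) (hA : 0 < A) (hB : 0 < B) (hNS0 : 0 < NS 0) (hMI0 : 0 < MI 0) :
    ∃ m > 0, ∀ t ∈ Ici (0:ℝ), m ≤ MI t := by
  set m := min (min A B / 2) (MI 0)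
  have hmA : m < A := (min_le_left _ _).trans_lt (by linarith [min_le_left A B])
  have hmB : m < B := (min_le_left _ _).trans_lt (by linarith [min_le_right A B])
  have hm : 0 < m := lt_min (by positivity) hMI0
  refine ⟨m, hm, fun t ht => le_of_hasDerivWithinAt_pos_of_eq h.hasDerivWithinAt_MI
    (min_le_right _ _) (fun s hs hMIs => ?_) ht⟩
  obtain ⟨-, -, hMS, -, -⟩ := h.bounds s hs
  -- Since `m < min A B`, the gain `A a (1 - MS) + B b MS` beats the loss `m (a (1 - MS) + b MS)`.
  have hgain : 0 < A * a * (1 - MS s) + B * b * MS s - m * (a * (1 - MS s) + b * MS s) := by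
    have hu : 0 ≤ a * (1 - MS s) := mul_nonneg (hb.le.trans hba) (sub_nonneg.2 hMS.2)
    have hv : 0 ≤ b * MS s := mul_nonneg hb.le hMS.1
    have hd : 0 < min (A - m) (B - m) := lt_min (sub_pos.2 hmA) (sub_pos.2 hmB)
    nlinarith [mul_le_mul_of_nonneg_right (min_le_left (A - m) (B - m)) hu,
      mul_le_mul_of_nonneg_right (min_le_right (A - m) (B - m)) hv,
      mul_le_mul_of_nonneg_left (mul_one_sub_add_mul_mem_Icc hba hMS).1 hd.le, mul_pos hd hb]
  rw [hMIs]
  exact mul_pos (mul_pos (h.NS_pos hb.le hba hNS0 hs) hm) hgain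

theorem tendsto_NS (h : IsMacroDiracSolution a b A B NS NI MS MI) (hb : 0 < b)
    (hba : b ≤ a) (hNI0 : 0 < NI 0) {m : ℝ} (hm : 0 < m) (hMI : ∀ t ∈ Ici (0:ℝ), m ≤ MI t) :
    Tendsto NS atTop (𝓝 0) := by
  refine tendsto_zero_of_hasDerivWithinAt_le_neg_mul (k := NI 0 * m * b) (by positivity)
    h.hasDerivWithinAt_NS (fun t ht => ?_) (fun t ht => (h.bounds t ht).1.1)
  obtain ⟨hNS, hNI, hMS, hMI', -⟩ := h.bounds t ht
  have hNIt : NI 0 ≤ NI t := h.monotoneOn_NI hb.le hba self_mem_Ici ht ht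
  have hrate : NI 0 * m * b ≤ NI t * MI t * (a * (1 - MS t) + b * MS t) :=
    mul_le_mul (mul_le_mul hNIt (hMI t ht) hm.le hNI.1)
      (mul_one_sub_add_mul_mem_Icc hba hMS).1 hb.le (mul_nonneg hNI.1 hMI'.1)
  nlinarith [mul_le_mul_of_nonneg_left hrate hNS.1]

theorem tendsto_MS (h : IsMacroDiracSolution a b A B NS NI MS MI) (hb : 0 ≤ b)
    (hba : b < a) (hNI0 : 0 < NI 0) (hMS0 : 0 < MS 0) {m : ℝ} (hm : 0 < m)
    (hMI : ∀ t ∈ Ici (0:ℝ), m ≤ MI t) : Tendsto MS atTop (𝓝 1) := by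
  have hgap : Tendsto (fun t => 1 - MS t) atTop (𝓝 0) := by
    refine tendsto_zero_of_hasDerivWithinAt_le_neg_mul (k := NI 0 * m * (a - b) * MS 0)
      (by have := sub_pos.2 hba; positivity)
      (fun t ht => (h.hasDerivWithinAt_MS t ht).const_sub 1) (fun t ht => ?_)
      (fun t ht => sub_nonneg.2 (h.bounds t ht).2.2.1.2)
    obtain ⟨-, hNI, hMS, hMI', -⟩ := h.bounds t ht
    have hNIt : NI 0 ≤ NI t := h.monotoneOn_NI hb hba.le self_mem_Ici ht ht
    have hMSt : MS 0 ≤ MS t := h.monotoneOn_MS hba.le self_mem_Ici ht ht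
    have hrate : NI 0 * m * (a - b) * MS 0 ≤ NI t * MI t * (a - b) * MS t :=
      mul_le_mul (mul_le_mul_of_nonneg_right (mul_le_mul hNIt (hMI t ht) hm.le hNI.1)
        (sub_pos.2 hba).le) hMSt hMS0.le
        (mul_nonneg (mul_nonneg hNI.1 hMI'.1) (sub_pos.2 hba).le)
    nlinarith [mul_le_mul_of_nonneg_left hrate (sub_nonneg.2 hMS.2)]
  simpa using (tendsto_const_nhds (x := (1:ℝ))).sub hgap

theorem tendsto_NI (h : IsMacroDiracSolution a b A B NS NI MS MI)
    (hNS : Tendsto NS atTop (𝓝 0)) : Tendsto NI atTop (𝓝 1) := by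
  have hone_sub : Tendsto (fun t => 1 - NS t) atTop (𝓝 1) := by
    simpa using (tendsto_const_nhds (x := (1:ℝ))).sub hNS
  refine hone_sub.congr' ?_
  filter_upwards [eventually_ge_atTop 0] with t ht
  linarith [(h.bounds t ht).2.2.2.2]

theorem conservation_law (h : IsMacroDiracSolution a b A B NS NI MS MI) {t : ℝ}
    (ht : t ∈ Ici (0:ℝ)) :
    NI t * MI t + NS t * (A * (1 - MS t) + B * MS t)
      = NI 0 * MI 0 + NS 0 * (A * (1 - MS 0) + B * MS 0) := by
  set W := fun s => NI s * MI s + NS s * (A * (1 - MS s) + B * MS s)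
  have hW : ∀ s ∈ Ici (0:ℝ), HasDerivWithinAt W 0 (Ici 0) s := fun s hs => by
    have hR : HasDerivWithinAt (fun s => A * (1 - MS s) + B * MS s)
        (A * -(NI s * MI s * (a - b) * (1 - MS s) * MS s)
          + B * (NI s * MI s * (a - b) * (1 - MS s) * MS s)) (Ici 0) s :=
      (((h.hasDerivWithinAt_MS s hs).const_sub 1).const_mul A).add
        ((h.hasDerivWithinAt_MS s hs).const_mul B)
    exact (((h.hasDerivWithinAt_NI s hs).mul (h.hasDerivWithinAt_MI s hs)).add
      ((h.hasDerivWithinAt_NS s hs).mul hR)).congr_deriv (by ring)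
  exact constant_of_has_deriv_right_zero
    (fun s hs => (hW s hs.1).continuousWithinAt.mono Icc_subset_Ici_self)
    (fun s hs => (hW s hs.1).mono (Ici_subset_Ici.2 hs.1)) t ⟨ht, le_rfl⟩

theorem tendsto_MI (h : IsMacroDiracSolution a b A B NS NI MS MI)
    (hNS : Tendsto NS atTop (𝓝 0)) (hMS : Tendsto MS atTop (𝓝 1)) :
    Tendsto MI atTop (𝓝 (NI 0 * MI 0 + NS 0 * (A * (1 - MS 0) + B * MS 0))) := by
  set W₀ := NI 0 * MI 0 + NS 0 * (A * (1 - MS 0) + B * MS 0)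
  have hNI := h.tendsto_NI hNS
  have hR : Tendsto (fun t => A * (1 - MS t) + B * MS t) atTop (𝓝 (A * (1 - 1) + B * 1)) :=
    ((tendsto_const_nhds.sub hMS).const_mul A).add (hMS.const_mul B)
  have hNIMI : Tendsto (fun t => (W₀ - NS t * (A * (1 - MS t) + B * MS t)) / NI t) atTop
      (𝓝 ((W₀ - 0 * (A * (1 - 1) + B * 1)) / 1)) :=
    (tendsto_const_nhds.sub (hNS.mul hR)).div hNI one_ne_zero
  rw [zero_mul, sub_zero, div_one] at hNIMI
  refine hNIMI.congr' ?_
  filter_upwards [hNI.eventually (lt_mem_nhds one_pos), eventually_ge_atTop 0] with t hNIt ht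
  rw [div_eq_iff hNIt.ne', show W₀ = _ from (h.conservation_law ht).symm]
  ring

end IsMacroDiracSolution

theorem longtime_prop1_general
    (a b A B NS0 MS0 MI0 : ℝ)
    (hA0 : 0 < A) (hB0 : 0 < B)
    (NS NI MS MI : ℝ → ℝ)
    (hNSinit : NS 0 = NS0) (hNS0 : NS0 ∈ Ioo (0:ℝ) 1)
    (hNIinit : NI 0 = 1 - NS0)
    (hMSinit : MS 0 = MS0) (hMS0 : MS0 ∈ Ioo (0:ℝ) 1)
    (hMIinit : MI 0 = MI0) (hMI0 : MI0 ∈ Ioo (0:ℝ) 1)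
    (hdNS : ∀ t ∈ Ici (0:ℝ), HasDerivWithinAt NS
      (-(NS t * NI t * MI t * (a * (1 - MS t) + b * MS t))) (Ici 0) t)
    (hdNI : ∀ t ∈ Ici (0:ℝ), HasDerivWithinAt NI
      (NS t * NI t * MI t * (a * (1 - MS t) + b * MS t)) (Ici 0) t)
    (hdMS : ∀ t ∈ Ici (0:ℝ), HasDerivWithinAt MS
      (NI t * MI t * (a - b) * (1 - MS t) * MS t) (Ici 0) t)
    (hdMI : ∀ t ∈ Ici (0:ℝ), HasDerivWithinAt MI
      (NS t * MI t * (A * a * (1 - MS t) + B * b * MS t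
        - MI t * (a * (1 - MS t) + b * MS t))) (Ici 0) t)
    (hbnd : ∀ t ∈ Ici (0:ℝ), NS t ∈ Icc (0:ℝ) 1 ∧ NI t ∈ Icc (0:ℝ) 1 ∧
      MS t ∈ Icc (0:ℝ) 1 ∧ MI t ∈ Icc (0:ℝ) 1 ∧ NS t + NI t = 1)
    (hbpos : 0 < b) (hba : b < a) :
    Tendsto NS atTop (nhds 0) ∧ Tendsto NI atTop (nhds 1) ∧
    Tendsto MS atTop (nhds 1) ∧
    Tendsto MI atTop (nhds ((1 - NS0) * MI0 + NS0 * (A * (1 - MS0) + B * MS0))) := by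
  have h : IsMacroDiracSolution a b A B NS NI MS MI := ⟨hdNS, hdNI, hdMS, hdMI, hbnd⟩
  have hNI0 : 0 < NI 0 := by rw [hNIinit]; linarith [hNS0.2]
  obtain ⟨m, hm, hMI⟩ := h.exists_pos_le_MI hbpos hba.le hA0 hB0 (hNSinit ▸ hNS0.1)
    (hMIinit ▸ hMI0.1)
  have hNS := h.tendsto_NS hbpos hba.le hNI0 hm hMI
  have hMS := h.tendsto_MS hbpos.le hba hNI0 (hMSinit ▸ hMS0.1) hm hMI
  refine ⟨hNS, h.tendsto_NI hNS, hMS, ?_⟩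
  simpa only [hNSinit, hNIinit, hMSinit, hMIinit] using h.tendsto_MI hNS hMS

/-- **Proposition 3.4** (long-time behaviour when `0 < q(1,1) < q(0,1) ≤ 1`).
Here `a = q(0,1)`, `b = q(1,1)`, `A = Q̄(0,1)`, `B = Q̄(1,1)`. -/
theorem longtime_prop1
    (a b A B NS0 MS0 MI0 : ℝ)
    (ha0 : 0 ≤ a) (ha1 : a ≤ 1) (hb0 : 0 ≤ b) (hb1 : b ≤ 1)
    (hA0 : 0 < A) (hA1 : A ≤ 1) (hB0 : 0 < B) (hB1 : B ≤ 1)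
    (NS NI MS MI : ℝ → ℝ)
    (hNSinit : NS 0 = NS0) (hNS0 : NS0 ∈ Ioo (0:ℝ) 1)
    (hNIinit : NI 0 = 1 - NS0)
    (hMSinit : MS 0 = MS0) (hMS0 : MS0 ∈ Ioo (0:ℝ) 1)
    (hMIinit : MI 0 = MI0) (hMI0 : MI0 ∈ Ioo (0:ℝ) 1)
    (hdNS : ∀ t ∈ Ici (0:ℝ), HasDerivWithinAt NS
      (-(NS t * NI t * MI t * (a * (1 - MS t) + b * MS t))) (Ici 0) t)
    (hdNI : ∀ t ∈ Ici (0:ℝ), HasDerivWithinAt NI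
      (NS t * NI t * MI t * (a * (1 - MS t) + b * MS t)) (Ici 0) t)
    (hdMS : ∀ t ∈ Ici (0:ℝ), HasDerivWithinAt MS
      (NI t * MI t * (a - b) * (1 - MS t) * MS t) (Ici 0) t)
    (hdMI : ∀ t ∈ Ici (0:ℝ), HasDerivWithinAt MI
      (NS t * MI t * (A * a * (1 - MS t) + B * b * MS t
        - MI t * (a * (1 - MS t) + b * MS t))) (Ici 0) t)
    (hbnd : ∀ t ∈ Ici (0:ℝ), NS t ∈ Icc (0:ℝ) 1 ∧ NI t ∈ Icc (0:ℝ) 1 ∧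
      MS t ∈ Icc (0:ℝ) 1 ∧ MI t ∈ Icc (0:ℝ) 1 ∧ NS t + NI t = 1)
    (hbpos : 0 < b) (hba : b < a) :
    Tendsto NS atTop (nhds 0) ∧ Tendsto NI atTop (nhds 1) ∧
    Tendsto MS atTop (nhds 1) ∧
    Tendsto MI atTop (nhds ((1 - NS0) * MI0 + NS0 * (A * (1 - MS0) + B * MS0))) :=
  longtime_prop1_general a b A B NS0 MS0 MI0 hA0 hB0 NS NI MS MI hNSinit hNS0 hNIinit hMSinit hMS0
    hMIinit hMI0 hdNS hdNI hdMS hdMI hbnd hbpos hba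
end

section
/- Long-time behaviour when q(1,1) = 0 and 0 < q(0,1) ≤ 1 (Proposition 3.5): Assume b = 0 and 0 < a ≤ 1. Then the solution of the macroscopic Dirac ODE system satisfies: N_S(t) → N_{S,0} M_{S,0}, N_I(t) → 1 - N_{S,0} M_{S,0}, M_S(t) → 1 as t → ∞, and M_I(t) → A - (A - M_{I,0})(1 - N_{S,0}) / (1 - N_{S,0} M_{S,0}) as t → ∞. -/
/-!
When `b = 0` the system has two conserved quantities, `NS * MS` and `(A - MI) * NI`, and `MS` is
nondecreasing. Hence `NS` decreases, `NI ≥ NI 0 > 0`, and `MI` stays above `min (MI 0) A > 0`, so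
`(1 - MS)' ≤ -ε (1 - MS)` for a fixed `ε > 0` and `MS → 1` exponentially fast (Grönwall). The
limits of `NS`, `NI` and `MI` are then read off from the conservation laws.
-/

open Set Filter Topology Real

section Calculus

variable {f f' : ℝ → ℝ} {x₀ : ℝ}

theorem monotoneOn_Ici_of_hasDerivWithinAt_nonneg
    (hf : ∀ t ∈ Ici x₀, HasDerivWithinAt f (f' t) (Ici x₀) t) (hf' : ∀ t ∈ Ici x₀, 0 ≤ f' t) :
    MonotoneOn f (Ici x₀) := by
  refine monotoneOn_of_hasDerivWithinAt_nonneg (f' := f') (convex_Ici x₀)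
    (fun t ht => (hf t ht).continuousWithinAt) (fun t ht => ?_) (fun t ht => ?_)
  all_goals rw [interior_Ici] at ht
  · rw [interior_Ici]
    exact (hf t (mem_Ioi.1 ht).le).mono Ioi_subset_Ici_self
  · exact hf' t (mem_Ioi.1 ht).le

theorem eq_of_hasDerivWithinAt_Ici_zero (hf : ∀ t ∈ Ici x₀, HasDerivWithinAt f 0 (Ici x₀) t) :
    ∀ t ∈ Ici x₀, f t = f x₀ := fun t ht =>
  constant_of_has_deriv_right_zero
    (fun s hs => (hf s hs.1).continuousWithinAt.mono Icc_subset_Ici_self)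
    (fun s hs => (hf s hs.1).mono (Ici_subset_Ici.2 hs.1)) t ⟨ht, le_rfl⟩

theorem le_mul_exp_of_hasDerivWithinAt_le_neg_mul {c : ℝ}
    (hf : ∀ t ∈ Ici x₀, HasDerivWithinAt f (f' t) (Ici x₀) t)
    (hf' : ∀ t ∈ Ici x₀, f' t ≤ -c * f t) :
    ∀ t ∈ Ici x₀, f t ≤ f x₀ * exp (-c * (t - x₀)) := by
  intro t ht
  have h := le_gronwallBound_of_liminf_deriv_right_le (K := -c) (ε := 0)
    (fun s hs => (hf s hs.1).continuousWithinAt.mono Icc_subset_Ici_self)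
    (fun s hs r hr => ((hf s hs.1).mono (Ici_subset_Ici.2 hs.1)).liminf_right_slope_le hr)
    le_rfl (fun s hs => (add_zero (-c * f s)).symm ▸ hf' s hs.1) t ⟨ht, le_rfl⟩
  rwa [gronwallBound_ε0] at h

end Calculus

structure IsDiracSolution (a b A B : ℝ) (NS NI MS MI : ℝ → ℝ) : Prop where
  hasDerivWithinAt_NS : ∀ t ∈ Ici (0:ℝ), HasDerivWithinAt NS
    (-(NS t * NI t * MI t * (a * (1 - MS t) + b * MS t))) (Ici 0) t
  hasDerivWithinAt_NI : ∀ t ∈ Ici (0:ℝ), HasDerivWithinAt NI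
    (NS t * NI t * MI t * (a * (1 - MS t) + b * MS t)) (Ici 0) t
  hasDerivWithinAt_MS : ∀ t ∈ Ici (0:ℝ), HasDerivWithinAt MS
    (NI t * MI t * (a - b) * (1 - MS t) * MS t) (Ici 0) t
  hasDerivWithinAt_MI : ∀ t ∈ Ici (0:ℝ), HasDerivWithinAt MI
    (NS t * MI t * (A * a * (1 - MS t) + B * b * MS t
      - MI t * (a * (1 - MS t) + b * MS t))) (Ici 0) t
  bounds : ∀ t ∈ Ici (0:ℝ), NS t ∈ Icc (0:ℝ) 1 ∧ NI t ∈ Icc (0:ℝ) 1 ∧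
    MS t ∈ Icc (0:ℝ) 1 ∧ MI t ∈ Icc (0:ℝ) 1 ∧ NS t + NI t = 1

namespace IsDiracSolution

variable {a b A B : ℝ} {NS NI MS MI : ℝ → ℝ}

theorem monotoneOn_MS (h : IsDiracSolution a b A B NS NI MS MI) (hba : b ≤ a) :
    MonotoneOn MS (Ici 0) :=
  monotoneOn_Ici_of_hasDerivWithinAt_nonneg h.hasDerivWithinAt_MS fun t ht => by
    obtain ⟨-, ⟨hNI, -⟩, ⟨hMS, hMS'⟩, ⟨hMI, -⟩, -⟩ := h.bounds t ht
    have : 0 ≤ 1 - MS t := sub_nonneg.2 hMS'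
    have : 0 ≤ a - b := sub_nonneg.2 hba
    positivity

theorem NS_mul_MS_eq (h : IsDiracSolution a 0 A B NS NI MS MI) :
    ∀ t ∈ Ici 0, NS t * MS t = NS 0 * MS 0 :=
  eq_of_hasDerivWithinAt_Ici_zero fun t ht =>
    ((h.hasDerivWithinAt_NS t ht).mul (h.hasDerivWithinAt_MS t ht)).congr_deriv (by ring)

theorem sub_MI_mul_NI_eq (h : IsDiracSolution a 0 A B NS NI MS MI) :
    ∀ t ∈ Ici 0, (A - MI t) * NI t = (A - MI 0) * NI 0 :=
  eq_of_hasDerivWithinAt_Ici_zero fun t ht =>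
    (((h.hasDerivWithinAt_MI t ht).const_sub A).mul (h.hasDerivWithinAt_NI t ht)).congr_deriv
      (by ring)

theorem NI_zero_le (h : IsDiracSolution a 0 A B NS NI MS MI) (ha : 0 ≤ a) (hMS0 : 0 < MS 0) :
    ∀ t ∈ Ici 0, NI 0 ≤ NI t := by
  intro t ht
  obtain ⟨⟨hNS, -⟩, -, -, -, hsum⟩ := h.bounds t ht
  have hsum0 := (h.bounds 0 self_mem_Ici).2.2.2.2
  have hMS : MS 0 ≤ MS t := h.monotoneOn_MS ha self_mem_Ici ht ht
  have : NS t * MS 0 ≤ NS 0 * MS 0 := h.NS_mul_MS_eq t ht ▸ mul_le_mul_of_nonneg_left hMS hNS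
  have : NS t ≤ NS 0 := le_of_mul_le_mul_right this hMS0
  linarith

theorem min_le_MI (h : IsDiracSolution a 0 A B NS NI MS MI) (ha : 0 ≤ a) (hMS0 : 0 < MS 0)
    (hNI0 : 0 < NI 0) : ∀ t ∈ Ici 0, min (MI 0) A ≤ MI t := by
  intro t ht
  have hNI := h.NI_zero_le ha hMS0 t ht
  -- `MI t` is the convex combination of `MI 0` and `A` with weight `NI 0 / NI t ∈ (0, 1]` on `MI 0`.
  have hconst := h.sub_MI_mul_NI_eq t ht
  rcases le_total (MI 0) A with hMI0 | hMI0
  · rw [min_eq_left hMI0]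
    nlinarith
  · rw [min_eq_right hMI0]
    nlinarith

theorem one_sub_MS_le_mul_exp (h : IsDiracSolution a 0 A B NS NI MS MI) (ha : 0 ≤ a)
    (hA : 0 ≤ A) (hMS0 : 0 < MS 0) (hNI0 : 0 < NI 0) (hMI0 : 0 ≤ MI 0) :
    ∀ t ∈ Ici 0, 1 - MS t ≤ (1 - MS 0) * exp (-(a * NI 0 * min (MI 0) A * MS 0) * t) := by
  have decay := le_mul_exp_of_hasDerivWithinAt_le_neg_mul (f := fun t => 1 - MS t)
    (c := a * NI 0 * min (MI 0) A * MS 0)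
    (fun t ht => (h.hasDerivWithinAt_MS t ht).const_sub 1) fun t ht => by
      obtain ⟨-, ⟨hNI, -⟩, ⟨-, hMS⟩, ⟨hMI, -⟩, -⟩ := h.bounds t ht
      have hrate : NI 0 * min (MI 0) A * MS 0 ≤ NI t * MI t * MS t := by
        have := h.NI_zero_le ha hMS0 t ht
        have := h.min_le_MI ha hMS0 hNI0 t ht
        have := h.monotoneOn_MS ha self_mem_Ici ht ht
        have : 0 ≤ min (MI 0) A := le_min hMI0 hA
        gcongr
      have : 0 ≤ a * (1 - MS t) := mul_nonneg ha (sub_nonneg.2 hMS)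
      nlinarith
  simpa only [sub_zero] using decay

theorem tendsto_MS (h : IsDiracSolution a 0 A B NS NI MS MI) (ha : 0 < a) (hA : 0 < A)
    (hMS0 : 0 < MS 0) (hNI0 : 0 < NI 0) (hMI0 : 0 < MI 0) : Tendsto MS atTop (𝓝 1) := by
  set c := a * NI 0 * min (MI 0) A * MS 0
  have hc : 0 < c := by have := lt_min hMI0 hA; positivity
  have hexp : Tendsto (fun t => exp (-c * t)) atTop (𝓝 0) :=
    tendsto_exp_comp_nhds_zero.2 (tendsto_id.const_mul_atTop_of_neg (neg_lt_zero.2 hc))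
  have hlower : Tendsto (fun t => 1 - (1 - MS 0) * exp (-c * t)) atTop (𝓝 1) := by
    simpa only [mul_zero, sub_zero] using (hexp.const_mul (1 - MS 0)).const_sub 1
  refine tendsto_of_tendsto_of_tendsto_of_le_of_le' hlower tendsto_const_nhds ?_ ?_
  all_goals filter_upwards [eventually_ge_atTop 0] with t ht
  · linarith [h.one_sub_MS_le_mul_exp ha.le hA.le hMS0 hNI0 hMI0.le t ht]
  · exact (h.bounds t ht).2.2.1.2

theorem tendsto_NS (h : IsDiracSolution a 0 A B NS NI MS MI) (hMS : Tendsto MS atTop (𝓝 1)) :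
    Tendsto NS atTop (𝓝 (NS 0 * MS 0)) := by
  have hquot : Tendsto (fun t => NS 0 * MS 0 / MS t) atTop (𝓝 (NS 0 * MS 0 / 1)) :=
    tendsto_const_nhds.div hMS one_ne_zero
  rw [div_one] at hquot
  refine hquot.congr' ?_
  filter_upwards [eventually_ge_atTop 0, hMS.eventually_ne one_ne_zero] with t ht hMSt
  rw [div_eq_iff hMSt, h.NS_mul_MS_eq t ht]

theorem tendsto_NI (h : IsDiracSolution a b A B NS NI MS MI) {L : ℝ}
    (hNS : Tendsto NS atTop (𝓝 L)) : Tendsto NI atTop (𝓝 (1 - L)) := by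
  refine (tendsto_const_nhds.sub hNS).congr' ?_
  filter_upwards [eventually_ge_atTop 0] with t ht
  linarith [(h.bounds t ht).2.2.2.2]

theorem tendsto_MI (h : IsDiracSolution a 0 A B NS NI MS MI) {L : ℝ}
    (hNI : Tendsto NI atTop (𝓝 L)) (hL : L ≠ 0) :
    Tendsto MI atTop (𝓝 (A - (A - MI 0) * NI 0 / L)) := by
  have hformula : Tendsto (fun t => A - (A - MI 0) * NI 0 / NI t) atTop
      (𝓝 (A - (A - MI 0) * NI 0 / L)) :=
    tendsto_const_nhds.sub (tendsto_const_nhds.div hNI hL)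
  refine hformula.congr' ?_
  filter_upwards [eventually_ge_atTop 0, hNI.eventually_ne hL] with t ht hNIt
  rw [← h.sub_MI_mul_NI_eq t ht, mul_div_cancel_right₀ _ hNIt, sub_sub_cancel]

end IsDiracSolution

theorem longtime_prop2_general
    (a b A B NS0 MS0 MI0 : ℝ)
    (hA0 : 0 < A)
    (NS NI MS MI : ℝ → ℝ)
    (hNSinit : NS 0 = NS0) (hNS0 : NS0 ∈ Ioo (0:ℝ) 1)
    (hNIinit : NI 0 = 1 - NS0)
    (hMSinit : MS 0 = MS0) (hMS0 : MS0 ∈ Ioo (0:ℝ) 1)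
    (hMIinit : MI 0 = MI0) (hMI0 : MI0 ∈ Ioo (0:ℝ) 1)
    (hdNS : ∀ t ∈ Ici (0:ℝ), HasDerivWithinAt NS
      (-(NS t * NI t * MI t * (a * (1 - MS t) + b * MS t))) (Ici 0) t)
    (hdNI : ∀ t ∈ Ici (0:ℝ), HasDerivWithinAt NI
      (NS t * NI t * MI t * (a * (1 - MS t) + b * MS t)) (Ici 0) t)
    (hdMS : ∀ t ∈ Ici (0:ℝ), HasDerivWithinAt MS
      (NI t * MI t * (a - b) * (1 - MS t) * MS t) (Ici 0) t)
    (hdMI : ∀ t ∈ Ici (0:ℝ), HasDerivWithinAt MI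
      (NS t * MI t * (A * a * (1 - MS t) + B * b * MS t
        - MI t * (a * (1 - MS t) + b * MS t))) (Ici 0) t)
    (hbnd : ∀ t ∈ Ici (0:ℝ), NS t ∈ Icc (0:ℝ) 1 ∧ NI t ∈ Icc (0:ℝ) 1 ∧
      MS t ∈ Icc (0:ℝ) 1 ∧ MI t ∈ Icc (0:ℝ) 1 ∧ NS t + NI t = 1)
    (hb : b = 0) (hapos : 0 < a)
    : Tendsto NS atTop (nhds (NS0 * MS0)) ∧ Tendsto NI atTop (nhds (1 - NS0 * MS0)) ∧
    Tendsto MS atTop (nhds 1) ∧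
    Tendsto MI atTop (nhds (A - (A - MI0) * (1 - NS0) / (1 - NS0 * MS0))) := by
  subst hb hNSinit hMSinit hMIinit
  have h : IsDiracSolution a 0 A B NS NI MS MI := ⟨hdNS, hdNI, hdMS, hdMI, hbnd⟩
  have hNI0 : 0 < NI 0 := by linarith [hNS0.2]
  have hMS := h.tendsto_MS hapos hA0 hMS0.1 hNI0 hMI0.1
  have hNS := h.tendsto_NS hMS
  have hNI := h.tendsto_NI hNS
  have hlim : 1 - NS 0 * MS 0 ≠ 0 := by nlinarith [hNS0.1, hNS0.2, hMS0.1, hMS0.2]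
  refine ⟨hNS, hNI, hMS, ?_⟩
  simpa only [hNIinit] using h.tendsto_MI hNI hlim

/-- **Proposition 3.5** (long-time behaviour when `q(1,1) = 0` and `0 < q(0,1) ≤ 1`).
Here `a = q(0,1)`, `b = q(1,1)`, `A = Q̄(0,1)`, `B = Q̄(1,1)`. -/
theorem longtime_prop2
    (a b A B NS0 MS0 MI0 : ℝ)
    (ha0 : 0 ≤ a) (ha1 : a ≤ 1) (hb0 : 0 ≤ b) (hb1 : b ≤ 1)
    (hA0 : 0 < A) (hA1 : A ≤ 1) (hB0 : 0 < B) (hB1 : B ≤ 1)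
    (NS NI MS MI : ℝ → ℝ)
    (hNSinit : NS 0 = NS0) (hNS0 : NS0 ∈ Ioo (0:ℝ) 1)
    (hNIinit : NI 0 = 1 - NS0)
    (hMSinit : MS 0 = MS0) (hMS0 : MS0 ∈ Ioo (0:ℝ) 1)
    (hMIinit : MI 0 = MI0) (hMI0 : MI0 ∈ Ioo (0:ℝ) 1)
    (hdNS : ∀ t ∈ Ici (0:ℝ), HasDerivWithinAt NS
      (-(NS t * NI t * MI t * (a * (1 - MS t) + b * MS t))) (Ici 0) t)
    (hdNI : ∀ t ∈ Ici (0:ℝ), HasDerivWithinAt NI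
      (NS t * NI t * MI t * (a * (1 - MS t) + b * MS t)) (Ici 0) t)
    (hdMS : ∀ t ∈ Ici (0:ℝ), HasDerivWithinAt MS
      (NI t * MI t * (a - b) * (1 - MS t) * MS t) (Ici 0) t)
    (hdMI : ∀ t ∈ Ici (0:ℝ), HasDerivWithinAt MI
      (NS t * MI t * (A * a * (1 - MS t) + B * b * MS t
        - MI t * (a * (1 - MS t) + b * MS t))) (Ici 0) t)
    (hbnd : ∀ t ∈ Ici (0:ℝ), NS t ∈ Icc (0:ℝ) 1 ∧ NI t ∈ Icc (0:ℝ) 1 ∧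
      MS t ∈ Icc (0:ℝ) 1 ∧ MI t ∈ Icc (0:ℝ) 1 ∧ NS t + NI t = 1)
    (hb : b = 0) (hapos : 0 < a)
    : Tendsto NS atTop (nhds (NS0 * MS0)) ∧ Tendsto NI atTop (nhds (1 - NS0 * MS0)) ∧
    Tendsto MS atTop (nhds 1) ∧
    Tendsto MI atTop (nhds (A - (A - MI0) * (1 - NS0) / (1 - NS0 * MS0))) :=
  longtime_prop2_general a b A B NS0 MS0 MI0 hA0 NS NI MS MI hNSinit hNS0 hNIinit hMSinit hMS0
    hMIinit hMI0 hdNS hdNI hdMS hdMI hbnd hb hapos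
end

section
/- Long-time behaviour when q(0,1) = q(1,1) = q* > 0 (Proposition 3.6): Assume a = b = q* with 0 < q* ≤ 1. Then the solution of the macroscopic Dirac ODE system satisfies: M_S(t) = M_{S,0} for all t ≥ 0, N_S(t) → 0 and N_I(t) → 1 as t → ∞, and M_I(t) → (1 - N_{S,0}) M_{I,0} + N_{S,0} (A (1 - M_{S,0}) + B M_{S,0}) as t → ∞. -/
/-!
When `q(0,1) = q(1,1)` the right-hand side of the `M_S` equation vanishes, so `M_S ≡ M_{S,0}`
and the system reduces to `N_S' = -q* N_S (1 - N_S) M_I`, `M_I' = q* N_S M_I (C - M_I)` with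
`C = Q̄(0,1) (1 - M_{S,0}) + Q̄(1,1) M_{S,0} ≥ 0`. The reduced system conserves
`M_I (1 - N_S) + C N_S`. Since `N_S` decreases, this invariant bounds `(1 - N_S) M_I` below by
its initial value `m > 0`, so `N_S' ≤ -q* m N_S` and `N_S` decays exponentially. The limit of
`M_I` is then read off the invariant.
-/

open Set Filter Topology Real

section Ici

variable {f f' : ℝ → ℝ} {a : ℝ}

theorem eq_of_hasDerivWithinAt_Ici_eq_zero
    (hf : ∀ t ∈ Ici a, HasDerivWithinAt f 0 (Ici a) t) : ∀ t ∈ Ici a, f t = f a := fun t ht =>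
  constant_of_has_deriv_right_zero
    (fun s hs => (hf s hs.1).continuousWithinAt.mono Icc_subset_Ici_self)
    (fun s hs => (hf s hs.1).mono (Ici_subset_Ici.2 hs.1)) t ⟨ht, le_rfl⟩

theorem le_mul_exp_of_hasDerivWithinAt_Ici_le {K : ℝ}
    (hf : ∀ t ∈ Ici a, HasDerivWithinAt f (f' t) (Ici a) t)
    (bound : ∀ t ∈ Ici a, f' t ≤ K * f t) : ∀ t ∈ Ici a, f t ≤ f a * exp (K * (t - a)) := by
  intro t ht
  rw [← gronwallBound_ε0]
  refine le_gronwallBound_of_liminf_deriv_right_le (f' := f')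
    (fun s hs => (hf s hs.1).continuousWithinAt.mono Icc_subset_Ici_self)
    (fun s hs _ hr => ((hf s hs.1).mono (Ici_subset_Ici.2 hs.1)).liminf_right_slope_le hr)
    le_rfl (fun s hs => by simpa using bound s hs.1) t ⟨ht, le_rfl⟩

theorem le_of_hasDerivWithinAt_Ici_nonpos
    (hf : ∀ t ∈ Ici a, HasDerivWithinAt f (f' t) (Ici a) t)
    (hf' : ∀ t ∈ Ici a, f' t ≤ 0) : ∀ t ∈ Ici a, f t ≤ f a := fun t ht => by
  simpa using le_mul_exp_of_hasDerivWithinAt_Ici_le (K := 0) hf (by simpa using hf') t ht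

end Ici

namespace ReducedDirac

variable {κ C : ℝ} {u v : ℝ → ℝ}

theorem invariant_eq
    (hu : ∀ t ∈ Ici (0:ℝ), HasDerivWithinAt u (-(κ * u t * (1 - u t) * v t)) (Ici 0) t)
    (hv : ∀ t ∈ Ici (0:ℝ), HasDerivWithinAt v (κ * u t * v t * (C - v t)) (Ici 0) t) :
    ∀ t ∈ Ici (0:ℝ), v t * (1 - u t) + C * u t = v 0 * (1 - u 0) + C * u 0 := by
  refine eq_of_hasDerivWithinAt_Ici_eq_zero
    (f := fun t => v t * (1 - u t) + C * u t) fun t ht => ?_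
  refine (((hv t ht).mul ((hu t ht).const_sub 1)).add ((hu t ht).const_mul C)).congr_deriv ?_
  ring

theorem u_le_u_zero (hκ : 0 ≤ κ)
    (hu : ∀ t ∈ Ici (0:ℝ), HasDerivWithinAt u (-(κ * u t * (1 - u t) * v t)) (Ici 0) t)
    (hu_mem : ∀ t ∈ Ici (0:ℝ), u t ∈ Icc 0 1) (hv_nonneg : ∀ t ∈ Ici (0:ℝ), 0 ≤ v t) :
    ∀ t ∈ Ici (0:ℝ), u t ≤ u 0 :=
  le_of_hasDerivWithinAt_Ici_nonpos hu fun t ht => by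
    have := (hu_mem t ht).1
    have := sub_nonneg.2 (hu_mem t ht).2
    have := hv_nonneg t ht
    simp only [neg_nonpos]
    positivity

theorem initial_le_v_mul_one_sub_u (hκ : 0 ≤ κ) (hC : 0 ≤ C)
    (hu : ∀ t ∈ Ici (0:ℝ), HasDerivWithinAt u (-(κ * u t * (1 - u t) * v t)) (Ici 0) t)
    (hv : ∀ t ∈ Ici (0:ℝ), HasDerivWithinAt v (κ * u t * v t * (C - v t)) (Ici 0) t)
    (hu_mem : ∀ t ∈ Ici (0:ℝ), u t ∈ Icc 0 1) (hv_nonneg : ∀ t ∈ Ici (0:ℝ), 0 ≤ v t) :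
    ∀ t ∈ Ici (0:ℝ), v 0 * (1 - u 0) ≤ v t * (1 - u t) := fun t ht => by
  have hinv := invariant_eq hu hv t ht
  have hdec := mul_le_mul_of_nonneg_left (u_le_u_zero hκ hu hu_mem hv_nonneg t ht) hC
  linarith

theorem tendsto_u_atTop_zero (hκ : 0 < κ) (hC : 0 ≤ C) (hu0 : u 0 < 1) (hv0 : 0 < v 0)
    (hu : ∀ t ∈ Ici (0:ℝ), HasDerivWithinAt u (-(κ * u t * (1 - u t) * v t)) (Ici 0) t)
    (hv : ∀ t ∈ Ici (0:ℝ), HasDerivWithinAt v (κ * u t * v t * (C - v t)) (Ici 0) t)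
    (hu_mem : ∀ t ∈ Ici (0:ℝ), u t ∈ Icc 0 1) (hv_nonneg : ∀ t ∈ Ici (0:ℝ), 0 ≤ v t) :
    Tendsto u atTop (𝓝 0) := by
  set m := v 0 * (1 - u 0)
  have hm : 0 < κ * m := mul_pos hκ (mul_pos hv0 (sub_pos.2 hu0))
  have hdecay : ∀ t ∈ Ici (0:ℝ), u t ≤ u 0 * exp (-(κ * m) * (t - 0)) :=
    le_mul_exp_of_hasDerivWithinAt_Ici_le hu fun t ht => by
      have := mul_le_mul_of_nonneg_left
        (initial_le_v_mul_one_sub_u hκ.le hC hu hv hu_mem hv_nonneg t ht)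
        (mul_nonneg hκ.le (hu_mem t ht).1)
      linarith
  have hbound : Tendsto (fun t => u 0 * exp (-(κ * m) * (t - 0))) atTop (𝓝 0) := by
    simpa using (tendsto_exp_neg_atTop_nhds_zero.comp
      (tendsto_id.const_mul_atTop hm)).const_mul (u 0)
  exact tendsto_of_tendsto_of_tendsto_of_le_of_le' tendsto_const_nhds hbound
    (eventually_ge_atTop 0 |>.mono fun t ht => (hu_mem t ht).1)
    (eventually_ge_atTop 0 |>.mono hdecay)

theorem tendsto_v_atTop (hκ : 0 < κ) (hC : 0 ≤ C) (hu0 : u 0 < 1) (hv0 : 0 < v 0)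
    (hu : ∀ t ∈ Ici (0:ℝ), HasDerivWithinAt u (-(κ * u t * (1 - u t) * v t)) (Ici 0) t)
    (hv : ∀ t ∈ Ici (0:ℝ), HasDerivWithinAt v (κ * u t * v t * (C - v t)) (Ici 0) t)
    (hu_mem : ∀ t ∈ Ici (0:ℝ), u t ∈ Icc 0 1) (hv_nonneg : ∀ t ∈ Ici (0:ℝ), 0 ≤ v t) :
    Tendsto v atTop (𝓝 (v 0 * (1 - u 0) + C * u 0)) := by
  have hu_lim := tendsto_u_atTop_zero hκ hC hu0 hv0 hu hv hu_mem hv_nonneg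
  have hquot := ((tendsto_const_nhds (x := v 0 * (1 - u 0) + C * u 0)).sub
    (hu_lim.const_mul C)).div (tendsto_const_nhds.sub hu_lim) (by norm_num : (1:ℝ) - 0 ≠ 0)
  rw [mul_zero, sub_zero, sub_zero, div_one] at hquot
  refine hquot.congr' (eventually_ge_atTop 0 |>.mono fun t ht => ?_)
  have hpos : 0 < 1 - u t := by linarith [u_le_u_zero hκ.le hu hu_mem hv_nonneg t ht]
  rw [Pi.div_apply, div_eq_iff hpos.ne', ← invariant_eq hu hv t ht]
  ring

end ReducedDirac

theorem longtime_prop3_general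
    (a b A B NS0 MS0 MI0 : ℝ)
    (hA0 : 0 < A) (hB0 : 0 < B)
    (NS NI MS MI : ℝ → ℝ)
    (hNSinit : NS 0 = NS0) (hNS0 : NS0 ∈ Ioo (0:ℝ) 1)
    (hMSinit : MS 0 = MS0) (hMS0 : MS0 ∈ Ioo (0:ℝ) 1)
    (hMIinit : MI 0 = MI0) (hMI0 : MI0 ∈ Ioo (0:ℝ) 1)
    (hdNS : ∀ t ∈ Ici (0:ℝ), HasDerivWithinAt NS
      (-(NS t * NI t * MI t * (a * (1 - MS t) + b * MS t))) (Ici 0) t)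
    (hdMS : ∀ t ∈ Ici (0:ℝ), HasDerivWithinAt MS
      (NI t * MI t * (a - b) * (1 - MS t) * MS t) (Ici 0) t)
    (hdMI : ∀ t ∈ Ici (0:ℝ), HasDerivWithinAt MI
      (NS t * MI t * (A * a * (1 - MS t) + B * b * MS t
        - MI t * (a * (1 - MS t) + b * MS t))) (Ici 0) t)
    (hbnd : ∀ t ∈ Ici (0:ℝ), NS t ∈ Icc (0:ℝ) 1 ∧ NI t ∈ Icc (0:ℝ) 1 ∧
      MS t ∈ Icc (0:ℝ) 1 ∧ MI t ∈ Icc (0:ℝ) 1 ∧ NS t + NI t = 1)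
    (hab : a = b) (hapos : 0 < a)
    : (∀ t ∈ Ici (0:ℝ), MS t = MS0) ∧
    Tendsto NS atTop (nhds 0) ∧ Tendsto NI atTop (nhds 1) ∧
    Tendsto MI atTop (nhds ((1 - NS0) * MI0 + NS0 * (A * (1 - MS0) + B * MS0))) := by
  subst hab hNSinit hMSinit hMIinit
  set C := A * (1 - MS 0) + B * MS 0
  have hMS : ∀ t ∈ Ici (0:ℝ), MS t = MS 0 :=
    eq_of_hasDerivWithinAt_Ici_eq_zero fun t ht => (hdMS t ht).congr_deriv (by ring)
  have hNI : ∀ t ∈ Ici (0:ℝ), NI t = 1 - NS t := fun t ht => by linarith [(hbnd t ht).2.2.2.2]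
  have hNS' : ∀ t ∈ Ici (0:ℝ), HasDerivWithinAt NS
      (-(a * NS t * (1 - NS t) * MI t)) (Ici 0) t := fun t ht =>
    (hdNS t ht).congr_deriv (by rw [hNI t ht]; ring)
  have hMI' : ∀ t ∈ Ici (0:ℝ), HasDerivWithinAt MI (a * NS t * MI t * (C - MI t)) (Ici 0) t :=
    fun t ht => (hdMI t ht).congr_deriv (by rw [hMS t ht]; ring)
  have hC : 0 ≤ C := add_nonneg (mul_nonneg hA0.le (sub_nonneg.2 hMS0.2.le))
    (mul_nonneg hB0.le hMS0.1.le)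
  have hNS_mem : ∀ t ∈ Ici (0:ℝ), NS t ∈ Icc 0 1 := fun t ht => (hbnd t ht).1
  have hMI_nonneg : ∀ t ∈ Ici (0:ℝ), 0 ≤ MI t := fun t ht => (hbnd t ht).2.2.2.1.1
  have hNS_lim := ReducedDirac.tendsto_u_atTop_zero hapos hC hNS0.2 hMI0.1 hNS' hMI' hNS_mem
    hMI_nonneg
  refine ⟨hMS, hNS_lim, ?_, ?_⟩
  · have h := (tendsto_const_nhds (x := (1:ℝ))).sub hNS_lim
    rw [sub_zero] at h
    exact h.congr' (eventually_ge_atTop 0 |>.mono fun t ht => (hNI t ht).symm)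
  · convert ReducedDirac.tendsto_v_atTop hapos hC hNS0.2 hMI0.1 hNS' hMI' hNS_mem hMI_nonneg
      using 2
    ring

/-- **Proposition 3.6** (long-time behaviour when `q(0,1) = q(1,1) = q* > 0`).
Here `a = q(0,1)`, `b = q(1,1)`, `A = Q̄(0,1)`, `B = Q̄(1,1)`. -/
theorem longtime_prop3
    (a b A B NS0 MS0 MI0 : ℝ)
    (ha0 : 0 ≤ a) (ha1 : a ≤ 1) (hb0 : 0 ≤ b) (hb1 : b ≤ 1)
    (hA0 : 0 < A) (hA1 : A ≤ 1) (hB0 : 0 < B) (hB1 : B ≤ 1)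
    (NS NI MS MI : ℝ → ℝ)
    (hNSinit : NS 0 = NS0) (hNS0 : NS0 ∈ Ioo (0:ℝ) 1)
    (hNIinit : NI 0 = 1 - NS0)
    (hMSinit : MS 0 = MS0) (hMS0 : MS0 ∈ Ioo (0:ℝ) 1)
    (hMIinit : MI 0 = MI0) (hMI0 : MI0 ∈ Ioo (0:ℝ) 1)
    (hdNS : ∀ t ∈ Ici (0:ℝ), HasDerivWithinAt NS
      (-(NS t * NI t * MI t * (a * (1 - MS t) + b * MS t))) (Ici 0) t)
    (hdNI : ∀ t ∈ Ici (0:ℝ), HasDerivWithinAt NI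
      (NS t * NI t * MI t * (a * (1 - MS t) + b * MS t)) (Ici 0) t)
    (hdMS : ∀ t ∈ Ici (0:ℝ), HasDerivWithinAt MS
      (NI t * MI t * (a - b) * (1 - MS t) * MS t) (Ici 0) t)
    (hdMI : ∀ t ∈ Ici (0:ℝ), HasDerivWithinAt MI
      (NS t * MI t * (A * a * (1 - MS t) + B * b * MS t
        - MI t * (a * (1 - MS t) + b * MS t))) (Ici 0) t)
    (hbnd : ∀ t ∈ Ici (0:ℝ), NS t ∈ Icc (0:ℝ) 1 ∧ NI t ∈ Icc (0:ℝ) 1 ∧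
      MS t ∈ Icc (0:ℝ) 1 ∧ MI t ∈ Icc (0:ℝ) 1 ∧ NS t + NI t = 1)
    (hab : a = b) (hapos : 0 < a)
    : (∀ t ∈ Ici (0:ℝ), MS t = MS0) ∧
    Tendsto NS atTop (nhds 0) ∧ Tendsto NI atTop (nhds 1) ∧
    Tendsto MI atTop (nhds ((1 - NS0) * MI0 + NS0 * (A * (1 - MS0) + B * MS0))) :=
  longtime_prop3_general a b A B NS0 MS0 MI0 hA0 hB0 NS NI MS MI hNSinit hNS0 hMSinit hMS0 hMIinit
    hMI0 hdNS hdMS hdMI hbnd hab hapos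
end

section
/- Power-law first integral when 0 < q(1,1) < q(0,1) ≤ 1 (equation (3.13) in the proof of Proposition 3.4): Assume 0 < b < a ≤ 1 and set p := a/(a - b). Then the solution of the macroscopic Dirac ODE system satisfies, for all t ≥ 0: 0 < M_S(t) < 1 and N_S(t) · M_S(t)^p · (1 - M_S(t))^{1-p} = N_{S,0} · M_{S,0}^p · (1 - M_{S,0})^{1-p}. -/
/-!
`M_S` and `1 - M_S` satisfy `f' ≥ -c f` (with `c = 0` and `c = a - b`), so `f t * exp (c t)` is
nondecreasing and both stay positive. On `0 < M_S < 1`, since `M_S' = N_I M_I (a - b) (1 - M_S) M_S`,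
the logarithmic derivative of `M_S ^ p (1 - M_S) ^ (1 - p)` is
`N_I M_I (a - b) (p - M_S) = N_I M_I (a (1 - M_S) + b M_S)` exactly when `p (a - b) = a`,
and this cancels the logarithmic derivative of `N_S`.
-/

open Set

open Real in
theorem pos_of_hasDerivWithinAt_of_neg_mul_le {f f' : ℝ → ℝ} {c x₀ : ℝ}
    (hf : ∀ t ∈ Ici x₀, HasDerivWithinAt f (f' t) (Ici x₀) t)
    (hf' : ∀ t ∈ Ici x₀, -c * f t ≤ f' t) (h₀ : 0 < f x₀) {t : ℝ} (ht : t ∈ Ici x₀) :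
    0 < f t := by
  have hmono : MonotoneOn (fun t => f t * exp (c * t)) (Ici x₀) := by
    refine monotoneOn_of_hasDerivWithinAt_nonneg (convex_Ici x₀)
      (f' := fun t => exp (c * t) * (f' t + c * f t))
      (ContinuousOn.mul (fun t ht => (hf t ht).continuousWithinAt) (by fun_prop)) ?_ ?_
      <;> rw [interior_Ici]
    · intro s hs
      have hexp : HasDerivWithinAt (fun t => exp (c * t)) (exp (c * s) * c) (Ioi x₀) s := by
        simpa using ((hasDerivAt_id s).const_mul c).exp.hasDerivWithinAt
      exact (((hf s (mem_Ici_of_Ioi hs)).mono Ioi_subset_Ici_self).mul hexp).congr_deriv (by ring)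
    · exact fun s hs => mul_nonneg (exp_pos _).le (by linarith [hf' s (mem_Ici_of_Ioi hs)])
  have := hmono self_mem_Ici ht ht
  exact pos_of_mul_pos_left ((mul_pos h₀ (exp_pos _)).trans_le this) (exp_pos _).le

noncomputable def powerLawIntegral (p n m : ℝ) : ℝ :=
  n * m ^ p * (1 - m) ^ (1 - p)

theorem hasDerivWithinAt_powerLawIntegral {N M : ℝ → ℝ} {s : Set ℝ} {t a b k : ℝ}
    (hab : a ≠ b) (hN : HasDerivWithinAt N (-(N t * k * (a * (1 - M t) + b * M t))) s t)
    (hM : HasDerivWithinAt M (k * (a - b) * (1 - M t) * M t) s t)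
    (hM₀ : 0 < M t) (hM₁ : M t < 1) :
    HasDerivWithinAt (fun x => powerLawIntegral (a / (a - b)) (N x) (M x)) 0 s t := by
  have hp : a / (a - b) * (a - b) = a := div_mul_cancel₀ a (sub_ne_zero.2 hab)
  generalize a / (a - b) = p at hp ⊢
  have hM₁' : 0 < 1 - M t := sub_pos.2 hM₁
  have hpow := (hN.mul (hM.rpow_const (p := p) (Or.inl hM₀.ne'))).mul
    ((hM.const_sub 1).rpow_const (p := 1 - p) (Or.inl hM₁'.ne'))
  refine hpow.congr_deriv ?_
  have hMp : M t ^ p = M t ^ (p - 1) * M t := by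
    rw [← Real.rpow_add_one hM₀.ne']; ring_nf
  have hM1p : (1 - M t) ^ (1 - p) = (1 - M t) ^ (1 - p - 1) * (1 - M t) := by
    rw [← Real.rpow_add_one hM₁'.ne']; ring_nf
  simp only [Pi.mul_apply]
  rw [hMp, hM1p]
  linear_combination k * N t * M t * (1 - M t) * M t ^ (p - 1) * (1 - M t) ^ (1 - p - 1) * hp

theorem powerlaw_first_integral_general
    (a b NS0 MS0 : ℝ)
    (NS NI MS MI : ℝ → ℝ)
    (hNSinit : NS 0 = NS0)
    (hMSinit : MS 0 = MS0) (hMS0 : MS0 ∈ Ioo (0:ℝ) 1)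
    (hdNS : ∀ t ∈ Ici (0:ℝ), HasDerivWithinAt NS
      (-(NS t * NI t * MI t * (a * (1 - MS t) + b * MS t))) (Ici 0) t)
    (hdMS : ∀ t ∈ Ici (0:ℝ), HasDerivWithinAt MS
      (NI t * MI t * (a - b) * (1 - MS t) * MS t) (Ici 0) t)
    (hbnd : ∀ t ∈ Ici (0:ℝ), NS t ∈ Icc (0:ℝ) 1 ∧ NI t ∈ Icc (0:ℝ) 1 ∧
      MS t ∈ Icc (0:ℝ) 1 ∧ MI t ∈ Icc (0:ℝ) 1 ∧ NS t + NI t = 1)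
    (hba : b < a)
    : ∀ t ∈ Ici (0:ℝ), MS t ∈ Ioo (0:ℝ) 1 ∧
      NS t * MS t ^ (a / (a - b)) * (1 - MS t) ^ (1 - a / (a - b))
        = NS0 * MS0 ^ (a / (a - b)) * (1 - MS0) ^ (1 - a / (a - b)) := by
  have hab : 0 ≤ a - b := sub_nonneg.2 hba.le
  have hMS_pos : ∀ t ∈ Ici (0:ℝ), 0 < MS t := fun t ht =>
    pos_of_hasDerivWithinAt_of_neg_mul_le (c := 0) hdMS (fun s hs => by
      obtain ⟨-, hNI, hMS, hMI, -⟩ := hbnd s hs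
      have h1MS := sub_nonneg.2 hMS.2
      simp only [neg_zero, zero_mul]
      apply_rules [mul_nonneg, hNI.1, hMI.1, hMS.1, h1MS]) (hMSinit ▸ hMS0.1) ht
  have hMS_lt_one : ∀ t ∈ Ici (0:ℝ), 0 < 1 - MS t := fun t ht =>
    pos_of_hasDerivWithinAt_of_neg_mul_le (c := a - b) (fun s hs => (hdMS s hs).const_sub 1)
      (fun s hs => by
        obtain ⟨-, hNI, hMS, hMI, -⟩ := hbnd s hs
        have hrate : NI s * MI s * MS s ≤ 1 :=
          mul_le_one₀ (mul_le_one₀ hNI.2 hMI.1 hMI.2) hMS.1 hMS.2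
        nlinarith [mul_le_mul_of_nonneg_right hrate (mul_nonneg hab (sub_nonneg.2 hMS.2))])
      (hMSinit ▸ sub_pos.2 hMS0.2) ht
  intro t ht
  refine ⟨⟨hMS_pos t ht, sub_pos.1 (hMS_lt_one t ht)⟩, ?_⟩
  have hderiv (s : ℝ) (hs : s ∈ Ici 0) :
      HasDerivWithinAt (fun t => powerLawIntegral (a / (a - b)) (NS t) (MS t)) 0 (Ici 0) s :=
    hasDerivWithinAt_powerLawIntegral (k := NI s * MI s) hba.ne'
      ((hdNS s hs).congr_deriv (by ring)) (hdMS s hs) (hMS_pos s hs) (sub_pos.1 (hMS_lt_one s hs))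
  have hconst := (convex_Ici 0).norm_image_sub_le_of_norm_hasDerivWithin_le hderiv
    (fun _ _ => norm_zero.le) self_mem_Ici ht
  simpa [powerLawIntegral, sub_eq_zero, hNSinit, hMSinit] using hconst

/-- Power-law first integral when `0 < q(1,1) < q(0,1) ≤ 1` (equation (3.13) in the
proof of Proposition 3.4), with `p = a/(a-b)` and real powers. -/
theorem powerlaw_first_integral
    (a b A B NS0 MS0 MI0 : ℝ)
    (ha0 : 0 ≤ a) (ha1 : a ≤ 1) (hb0 : 0 ≤ b) (hb1 : b ≤ 1)
    (hA0 : 0 < A) (hA1 : A ≤ 1) (hB0 : 0 < B) (hB1 : B ≤ 1)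
    (NS NI MS MI : ℝ → ℝ)
    (hNSinit : NS 0 = NS0) (hNS0 : NS0 ∈ Ioo (0:ℝ) 1)
    (hNIinit : NI 0 = 1 - NS0)
    (hMSinit : MS 0 = MS0) (hMS0 : MS0 ∈ Ioo (0:ℝ) 1)
    (hMIinit : MI 0 = MI0) (hMI0 : MI0 ∈ Ioo (0:ℝ) 1)
    (hdNS : ∀ t ∈ Ici (0:ℝ), HasDerivWithinAt NS
      (-(NS t * NI t * MI t * (a * (1 - MS t) + b * MS t))) (Ici 0) t)
    (hdNI : ∀ t ∈ Ici (0:ℝ), HasDerivWithinAt NI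
      (NS t * NI t * MI t * (a * (1 - MS t) + b * MS t)) (Ici 0) t)
    (hdMS : ∀ t ∈ Ici (0:ℝ), HasDerivWithinAt MS
      (NI t * MI t * (a - b) * (1 - MS t) * MS t) (Ici 0) t)
    (hdMI : ∀ t ∈ Ici (0:ℝ), HasDerivWithinAt MI
      (NS t * MI t * (A * a * (1 - MS t) + B * b * MS t
        - MI t * (a * (1 - MS t) + b * MS t))) (Ici 0) t)
    (hbnd : ∀ t ∈ Ici (0:ℝ), NS t ∈ Icc (0:ℝ) 1 ∧ NI t ∈ Icc (0:ℝ) 1 ∧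
      MS t ∈ Icc (0:ℝ) 1 ∧ MI t ∈ Icc (0:ℝ) 1 ∧ NS t + NI t = 1)
    (hbpos : 0 < b) (hba : b < a)
    : ∀ t ∈ Ici (0:ℝ), MS t ∈ Ioo (0:ℝ) 1 ∧
      NS t * MS t ^ (a / (a - b)) * (1 - MS t) ^ (1 - a / (a - b))
        = NS0 * MS0 ^ (a / (a - b)) * (1 - MS0) ^ (1 - a / (a - b)) :=
  powerlaw_first_integral_general a b NS0 MS0 NS NI MS MI hNSinit hMSinit hMS0 hdNS hdMS hbnd hba
end

section
/- Long-time behaviour of the reduced macroscopic model, epidemic case (Proposition D.1, part (i)): Assume 0 ≤ μ_S < 1 and 0 < μ_I ≤ 1. Then the solution of the reduced macroscopic ODE system satisfies N_S(t) → 0 and N_I(t) → 1 as t → ∞. -/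
open Set Filter Real

/-! `NS' = -c NI NS ≤ 0` with `c = μI (1 - μS) > 0`, so `NS` is nonincreasing and
`NI = 1 - NS ≥ 1 - NS0 > 0`. Hence `NS' ≤ -c (1 - NS0) NS`, and Grönwall's inequality gives
exponential decay of `NS`. -/

theorem le_mul_exp_of_hasDerivWithinAt_Ici {f f' : ℝ → ℝ} {K : ℝ}
    (hf : ∀ t ∈ Ici (0:ℝ), HasDerivWithinAt f (f' t) (Ici 0) t)
    (bound : ∀ t ∈ Ici (0:ℝ), f' t ≤ K * f t) {t : ℝ} (ht : 0 ≤ t) :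
    f t ≤ f 0 * exp (K * t) := by
  have hsub : Icc 0 t ⊆ Ici 0 := Icc_subset_Ici_self
  have key := le_gronwallBound_of_liminf_deriv_right_le (f' := f') (ε := 0)
    (fun x hx => (hf x (hsub hx)).continuousWithinAt.mono hsub)
    (fun x hx _ hr =>
      ((hf x hx.1).mono (Ici_subset_Ici.mpr hx.1)).liminf_right_slope_le hr)
    le_rfl (fun x hx => by simpa using bound x hx.1) t ⟨ht, le_rfl⟩
  simpa [gronwallBound_ε0] using key

theorem tendsto_zero_of_nonneg_of_le_mul_exp_neg {f : ℝ → ℝ} {a k : ℝ} (hk : 0 < k)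
    (hf : ∀ t ∈ Ici (0:ℝ), 0 ≤ f t ∧ f t ≤ a * exp (-k * t)) :
    Tendsto f atTop (nhds 0) := by
  have hexp : Tendsto (fun t => a * exp (-k * t)) atTop (nhds 0) := by
    simpa using (tendsto_exp_comp_nhds_zero.mpr
      (tendsto_id.const_mul_atTop_of_neg (neg_neg_of_pos hk))).const_mul a
  refine tendsto_of_tendsto_of_tendsto_of_le_of_le' tendsto_const_nhds hexp ?_ ?_ <;>
    filter_upwards [eventually_ge_atTop 0] with t ht
  exacts [(hf t ht).1, (hf t ht).2]

theorem reduced_longtime_epidemic_general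
    (μS μI NS0 : ℝ)
    (NS NI : ℝ → ℝ)
    (hNS0 : NS0 ∈ Ioo (0:ℝ) 1) (hNSinit : NS 0 = NS0)
    (hdNS : ∀ t ∈ Ici (0:ℝ), HasDerivWithinAt NS
      (-(μI * NI t * (1 - μS) * NS t)) (Ici 0) t)
    (hbnd : ∀ t ∈ Ici (0:ℝ), NS t ∈ Icc (0:ℝ) 1 ∧ NI t ∈ Icc (0:ℝ) 1 ∧ NS t + NI t = 1)
    (hμS1 : μS < 1) (hμIpos : 0 < μI)
    : Tendsto NS atTop (nhds 0) ∧ Tendsto NI atTop (nhds 1) := by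
  set c := μI * (1 - μS)
  have hc : 0 < c := mul_pos hμIpos (by linarith)
  have hdNS' : ∀ t ∈ Ici (0:ℝ), HasDerivWithinAt NS (-(c * NI t) * NS t) (Ici 0) t :=
    fun t ht => by convert hdNS t ht using 1; ring
  have hNS_le : ∀ t ∈ Ici (0:ℝ), NS t ≤ NS0 := fun t ht => by
    have := le_mul_exp_of_hasDerivWithinAt_Ici hdNS' (K := 0) (fun s hs => by
      have := mul_nonneg (mul_nonneg hc.le (hbnd s hs).2.1.1) (hbnd s hs).1.1
      linarith) ht
    simpa [hNSinit] using this
  have hdecay : ∀ t ∈ Ici (0:ℝ), NS t ≤ NS0 * exp (-(c * (1 - NS0)) * t) := fun t ht => by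
    have := le_mul_exp_of_hasDerivWithinAt_Ici hdNS' (K := -(c * (1 - NS0))) (fun s hs => by
      have := mul_nonneg hc.le (mul_nonneg (hbnd s hs).1.1
        (show 0 ≤ NI s - (1 - NS0) by linarith [hNS_le s hs, (hbnd s hs).2.2]))
      linarith) ht
    rwa [hNSinit] at this
  have hNS : Tendsto NS atTop (nhds 0) :=
    tendsto_zero_of_nonneg_of_le_mul_exp_neg (mul_pos hc (by linarith [hNS0.2]))
      fun t ht => ⟨(hbnd t ht).1.1, hdecay t ht⟩
  refine ⟨hNS, ?_⟩
  have hNI : NI =ᶠ[atTop] fun t => 1 - NS t := by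
    filter_upwards [eventually_ge_atTop 0] with t ht
    linarith [(hbnd t ht).2.2]
  simpa using (hNS.const_sub 1).congr' hNI.symm

/-- **Proposition D.1, part (i)**: long-time behaviour of the reduced macroscopic
model in the epidemic case `0 ≤ μ_S < 1`, `0 < μ_I ≤ 1`. -/
theorem reduced_longtime_epidemic
    (μS μI NS0 : ℝ)
    (hμS : μS ∈ Icc (0:ℝ) 1) (hμI : μI ∈ Icc (0:ℝ) 1)
    (NS NI : ℝ → ℝ)
    (hNS0 : NS0 ∈ Ioo (0:ℝ) 1) (hNSinit : NS 0 = NS0) (hNIinit : NI 0 = 1 - NS0)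
    (hdNS : ∀ t ∈ Ici (0:ℝ), HasDerivWithinAt NS
      (-(μI * NI t * (1 - μS) * NS t)) (Ici 0) t)
    (hdNI : ∀ t ∈ Ici (0:ℝ), HasDerivWithinAt NI
      ((1 - μS) * NS t * (μI * NI t)) (Ici 0) t)
    (hbnd : ∀ t ∈ Ici (0:ℝ), NS t ∈ Icc (0:ℝ) 1 ∧ NI t ∈ Icc (0:ℝ) 1 ∧ NS t + NI t = 1)
    (hμS1 : μS < 1) (hμIpos : 0 < μI)
    : Tendsto NS atTop (nhds 0) ∧ Tendsto NI atTop (nhds 1) :=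
  reduced_longtime_epidemic_general μS μI NS0 NS NI hNS0 hNSinit hdNS hbnd hμS1 hμIpos
end
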